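/- There exists no valid encoding from L_{A,M,C,NO,B} (asynchronous, monadic, channel-based, no-matching, binary; i.e. the asynchronous monadic π-calculus) into L_{A,M,D,NO,J} (asynchronous, monadic, dataspace-based, no-matching, joining). -/

import Mathlib

/-!
A formalization of the framework of Given-Wilson's
"On the Expressiveness of Joining and Splitting":
the 48 process calculi parameterized by synchronism, arity,
communication medium, pattern-matching and coordination,
with structural congruence, reduction, valid encodings and
coordination degree.
-/

namespace Coordination

/-- Names. -/
abbrev Name := ℕ

/-- Terms: names and compounds `s • t`. -/
inductive Term : Type
  | name : Name → Term
  | comp : Term → Term → Term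
  deriving DecidableEq

/-- Intensional patterns: binding names `x`, name-matches `⌜a⌝`, compounds `p • q`. -/
inductive Pat : Type
  | bind : Name → Pat
  | nmatch : Name → Pat
  | comp : Pat → Pat → Pat
  deriving DecidableEq

/-- Processes.  The syntax is generic enough to cover all 48 languages:
outputs have an optional channel, a tuple of terms, and a continuation
(which is `nil` for asynchronous languages); inputs are joins, i.e. lists of
(optional channel, tuple of patterns) pairs (singletons for binary languages). -/
inductive Proc : Type
  | nil : Proc
  | out : Option Term → List Term → Proc → Proc
  | inp : List (Option Term × List Pat) → Proc → Proc
  | res : Name → Proc → Proc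
  | par : Proc → Proc → Proc
  | ite : Term → Term → Proc → Proc → Proc
  | repl : Proc → Proc
  | succ : Proc

/-- Names of a term. -/
def Term.names : Term → Finset Name
  | .name a => {a}
  | .comp s t => s.names ∪ t.names

/-- Binding names of a pattern (in order). -/
def Pat.binds : Pat → List Name
  | .bind x => [x]
  | .nmatch _ => []
  | .comp p q => p.binds ++ q.binds

/-- Free (name-match) names of a pattern. -/
def Pat.frees : Pat → Finset Name
  | .bind _ => ∅
  | .nmatch a => {a}
  | .comp p q => p.frees ∪ q.frees

def optNames : Option Term → Finset Name
  | none => ∅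
  | some t => t.names

/-- Binding names of a join. -/
def joinBinds (J : List (Option Term × List Pat)) : List Name :=
  J.foldr (fun j acc => (j.2.foldr (fun p b => p.binds ++ b) []) ++ acc) []

/-- Free names of a join (channels and name-matches). -/
def joinFrees (J : List (Option Term × List Pat)) : Finset Name :=
  J.foldr (fun j acc => optNames j.1 ∪ (j.2.foldr (fun p b => p.frees ∪ b) ∅) ∪ acc) ∅

/-- Free names of a process. -/
def Proc.fnames : Proc → Finset Name
  | .nil => ∅
  | .out ch ts P => optNames ch ∪ ts.foldr (fun t a => t.names ∪ a) ∅ ∪ P.fnames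
  | .inp J P => joinFrees J ∪ (P.fnames \ (joinBinds J).toFinset)
  | .res a P => P.fnames.erase a
  | .par P Q => P.fnames ∪ Q.fnames
  | .ite s t P Q => s.names ∪ t.names ∪ P.fnames ∪ Q.fnames
  | .repl P => P.fnames
  | .succ => ∅

/-- All names of a process (free, bound and binding). -/
def Proc.anames : Proc → Finset Name
  | .nil => ∅
  | .out ch ts P => optNames ch ∪ ts.foldr (fun t a => t.names ∪ a) ∅ ∪ P.anames
  | .inp J P => joinFrees J ∪ (joinBinds J).toFinset ∪ P.anames
  | .res a P => insert a P.anames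
  | .par P Q => P.anames ∪ Q.anames
  | .ite s t P Q => s.names ∪ t.names ∪ P.anames ∪ Q.anames
  | .repl P => P.anames
  | .succ => ∅

/-- Substitutions: mappings from names to terms (identity outside the domain). -/
abbrev Sub := Name → Term

def Term.subst (σ : Sub) : Term → Term
  | .name a => σ a
  | .comp s t => .comp (s.subst σ) (t.subst σ)

/-- The name-match pattern `⌜t⌝` of a term, with `⌜s•t⌝ = ⌜s⌝•⌜t⌝`. -/
def Term.toMatchPat : Term → Pat
  | .name a => .nmatch a
  | .comp s t => .comp s.toMatchPat t.toMatchPat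

def Pat.subst (σ : Sub) : Pat → Pat
  | .bind x => .bind x
  | .nmatch a => (σ a).toMatchPat
  | .comp p q => .comp (p.subst σ) (q.subst σ)

/-- Remove a list of (bound) names from the domain of a substitution. -/
def shadow (σ : Sub) (bs : List Name) : Sub :=
  fun x => if x ∈ bs then Term.name x else σ x

/-- Application of a substitution to a process (binders shadow the domain). -/
def Proc.subst (σ : Sub) : Proc → Proc
  | .nil => .nil
  | .out ch ts P => .out (ch.map (Term.subst σ)) (ts.map (Term.subst σ)) (P.subst σ)
  | .inp J P =>
      .inp (J.map fun j => (j.1.map (Term.subst σ), j.2.map (Pat.subst σ)))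
        (P.subst (shadow σ (joinBinds J)))
  | .res a P => .res a (P.subst (shadow σ [a]))
  | .par P Q => .par (P.subst σ) (Q.subst σ)
  | .ite s t P Q => .ite (s.subst σ) (t.subst σ) (P.subst σ) (Q.subst σ)
  | .repl P => .repl (P.subst σ)
  | .succ => .succ

/-- The match rule `{t // p}`, producing an association list (the substitution). -/
def matchPat : Term → Pat → Option (List (Name × Term))
  | t, .bind x => some [(x, t)]
  | .name a, .nmatch b => if a = b then some [] else none
  | .comp s t, .comp p q => do
      let l₁ ← matchPat s p
      let l₂ ← matchPat t q
      pure (l₁ ++ l₂)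
  | _, _ => none

/-- The poly-match rule `Match(t̃ ; p̃)`. -/
def polyMatch : List Term → List Pat → Option (List (Name × Term))
  | [], [] => some []
  | t :: ts, p :: ps => do
      let l₁ ← matchPat t p
      let l₂ ← polyMatch ts ps
      pure (l₁ ++ l₂)
  | _, _ => none

/-- Matching of a list of outputs (channel and data) against a join:
channels must agree pairwise and the data must poly-match the patterns. -/
def joinMatch : List (Option Term × List Term) → List (Option Term × List Pat) →
    Option (List (Name × Term))
  | [], [] => some []
  | (c, ts) :: os, (c', ps) :: js =>
      if c = c' then do
        let l₁ ← polyMatch ts ps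
        let l₂ ← joinMatch os js
        pure (l₁ ++ l₂)
      else none
  | _, _ => none

/-- Turn an association list into a substitution. -/
def toSub (l : List (Name × Term)) : Sub :=
  fun x => (l.lookup x).getD (Term.name x)

/-- Parallel composition of a list of processes. -/
def parList (l : List Proc) : Proc := l.foldr Proc.par Proc.nil

/-- Renaming of one binding name in a pattern. -/
def renameBindPat (x b : Name) : Pat → Pat
  | .bind y => if y = x then .bind b else .bind y
  | .nmatch a => .nmatch a
  | .comp p q => .comp (renameBindPat x b p) (renameBindPat x b q)

def renameBindJoin (x b : Name) (J : List (Option Term × List Pat)) :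
    List (Option Term × List Pat) :=
  J.map fun j => (j.1, j.2.map (renameBindPat x b))

/-- The substitution replacing the name `a` by the name `b`. -/
def ren1 (a b : Name) : Sub :=
  fun x => if x = a then Term.name b else Term.name x

/-- Structural congruence. -/
inductive Congr : Proc → Proc → Prop
  | refl (P : Proc) : Congr P P
  | symm : Congr P Q → Congr Q P
  | trans : Congr P Q → Congr Q R → Congr P R
  | par_nil (P : Proc) : Congr (.par P .nil) P
  | par_comm (P Q : Proc) : Congr (.par P Q) (.par Q P)
  | par_assoc (P Q R : Proc) : Congr (.par P (.par Q R)) (.par (.par P Q) R)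
  | ite_eq (s : Term) (P Q : Proc) : Congr (.ite s s P Q) P
  | ite_ne (h : s ≠ t) (P Q : Proc) : Congr (.ite s t P Q) Q
  | res_nil (a : Name) : Congr (.res a .nil) .nil
  | res_swap (a b : Name) (P : Proc) : Congr (.res a (.res b P)) (.res b (.res a P))
  | res_par (h : a ∉ Proc.fnames P) : Congr (.par P (.res a Q)) (.res a (.par P Q))
  | repl_unfold (P : Proc) : Congr (.repl P) (.par P (.repl P))
  | alpha_res (h : b ∉ Proc.anames P) :
      Congr (.res a P) (.res b (P.subst (ren1 a b)))
  | alpha_inp (hx : x ∈ joinBinds J) (hb : b ∉ Proc.anames (.inp J P)) :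
      Congr (.inp J P) (.inp (renameBindJoin x b J) (P.subst (ren1 x b)))
  | ctx_out : Congr P P' → Congr (.out ch ts P) (.out ch ts P')
  | ctx_inp : Congr P P' → Congr (.inp J P) (.inp J P')
  | ctx_res : Congr P P' → Congr (.res a P) (.res a P')
  | ctx_par : Congr P P' → Congr Q Q' → Congr (.par P Q) (.par P' Q')
  | ctx_ite : Congr P P' → Congr Q Q' → Congr (.ite s t P Q) (.ite s t P' Q')
  | ctx_repl : Congr P P' → Congr (.repl P) (.repl P')

/-- Reduction: the (joining) interaction axiom closed under parallel
composition, restriction and structural congruence.  The binary interaction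
axiom is the special case of a singleton join. -/
inductive Red : Proc → Proc → Prop
  | interact (outs : List (Option Term × List Term × Proc))
      (J : List (Option Term × List Pat)) (Q : Proc) (l : List (Name × Term))
      (hne : outs ≠ [])
      (hm : joinMatch (outs.map fun o => (o.1, o.2.1)) J = some l) :
      Red (.par (parList (outs.map fun o => Proc.out o.1 o.2.1 o.2.2)) (.inp J Q))
          (.par (parList (outs.map fun o => o.2.2)) (Q.subst (toSub l)))
  | ctx_par : Red P P' → Red (.par P Q) (.par P' Q)
  | ctx_res : Red P P' → Red (.res a P) (.res a P')
  | struct : Congr P Q → Red Q Q' → Congr Q' P' → Red P P'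

/-- Reflexive-transitive closure of reduction. -/
abbrev Reds := Relation.ReflTransGen Red

/-- `P` has a reduction. -/
def Reduces (P : Proc) : Prop := ∃ Q, Red P Q

/-- `P ⇓`: `P` may reduce to a process with `✓` at top level. -/
def MaySucceed (P : Proc) : Prop :=
  ∃ Q R, Reds P Q ∧ Congr Q (.par R .succ)

/-- `P` diverges: it has an infinite reduction sequence. -/
def Diverges (P : Proc) : Prop :=
  ∃ f : ℕ → Proc, f 0 = P ∧ ∀ n, Red (f n) (f (n + 1))

/-! ### The 48 languages -/

inductive Sync | A | S
  deriving DecidableEq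
inductive Arity | M | P
  deriving DecidableEq
inductive Medium | D | C
  deriving DecidableEq
inductive PM | NO | NM | I
  deriving DecidableEq
inductive Coord | B | J
  deriving DecidableEq

/-- The five features determining a language `L_{α,β,γ,δ,ε}`. -/
structure Features where
  sync : Sync
  arity : Arity
  medium : Medium
  pm : PM
  coord : Coord

def Term.isName : Term → Prop
  | .name _ => True
  | _ => False

/-- Patterns allowed by a pattern-matching discipline. -/
def WFpat : PM → Pat → Prop
  | .NO, .bind _ => True
  | .NO, _ => False
  | .NM, .bind _ => True
  | .NM, .nmatch _ => True
  | .NM, _ => False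
  | .I, _ => True

/-- Channels allowed by a language: none for dataspace-based languages,
a term (a name unless intensional) for channel-based languages. -/
def WFchan (F : Features) : Option Term → Prop
  | none => F.medium = .D
  | some t => F.medium = .C ∧ (F.pm = .I ∨ t.isName)

/-- Output data: arbitrary terms only in intensional languages. -/
def WFdataTerm (F : Features) (t : Term) : Prop := F.pm = .I ∨ t.isName

/-- Tuple arity: one for monadic languages. -/
def WFarity (F : Features) (n : ℕ) : Prop :=
  match F.arity with
  | .M => n = 1
  | .P => True

/-- Number of input patterns in a join: one for binary languages. -/
def WFjoinLen (F : Features) (n : ℕ) : Prop :=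
  match F.coord with
  | .B => n = 1
  | .J => 1 ≤ n

/-- Well-formed processes of the language `L_F`. -/
def Proc.WF (F : Features) : Proc → Prop
  | .nil => True
  | .out ch ts P => WFchan F ch ∧ WFarity F ts.length ∧ (∀ t ∈ ts, WFdataTerm F t) ∧
      (F.sync = .A → P = .nil) ∧ P.WF F
  | .inp J P => WFjoinLen F J.length ∧
      (∀ j ∈ J, WFchan F j.1 ∧ WFarity F j.2.length ∧ ∀ p ∈ j.2, WFpat F.pm p) ∧
      (joinBinds J).Nodup ∧ P.WF F
  | .res _ P => P.WF F
  | .par P Q => P.WF F ∧ Q.WF F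
  | .ite s t P Q => WFdataTerm F s ∧ WFdataTerm F t ∧ P.WF F ∧ Q.WF F
  | .repl P => P.WF F
  | .succ => True

/-! ### Contexts and valid encodings -/

/-- `k`-ary (linear, multi-hole) contexts. -/
inductive Ctx : ℕ → Type
  | hole : Ctx 1
  | const : Proc → Ctx 0
  | out : Option Term → List Term → Ctx k → Ctx k
  | inp : List (Option Term × List Pat) → Ctx k → Ctx k
  | res : Name → Ctx k → Ctx k
  | par : Ctx k → Ctx m → Ctx (k + m)
  | ite : Term → Term → Ctx k → Ctx m → Ctx (k + m)
  | repl : Ctx k → Ctx k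

/-- Filling the holes of a context with processes, in order. -/
def Ctx.fill : {k : ℕ} → Ctx k → (Fin k → Proc) → Proc
  | _, .hole, f => f 0
  | _, .const P, _ => P
  | _, .out ch ts C, f => .out ch ts (C.fill f)
  | _, .inp J C, f => .inp J (C.fill f)
  | _, .res a C, f => .res a (C.fill f)
  | _, .par C D, f =>
      .par (C.fill (fun i => f (Fin.castAdd _ i))) (D.fill (fun i => f (Fin.natAdd _ i)))
  | _, .ite s t C D, f =>
      .ite s t (C.fill (fun i => f (Fin.castAdd _ i))) (D.fill (fun i => f (Fin.natAdd _ i)))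
  | _, .repl C, f => .repl (C.fill f)

/-- Application of a name-substitution to a process. -/
def nsub (σ : Name → Name) (P : Proc) : Proc :=
  P.subst (fun x => Term.name (σ x))

/-- A valid encoding of `L_{F₁}` into `L_{F₂}`: a translation `enc` together
with a renaming policy `φ`, satisfying compositionality, name invariance,
operational correspondence (up to a reduction-sensitive reference behavioural
equivalence `beq` of the target), divergence reflection and
success sensitiveness. -/
structure ValidEncoding (F₁ F₂ : Features) where
  enc : Proc → Proc
  k : ℕ
  k_pos : 0 < k
  φ : Name → List Name
  φ_len : ∀ a, (φ a).length = k
  enc_wf : ∀ S, S.WF F₁ → (enc S).WF F₂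
  /-- the reference behavioural equivalence of the target language -/
  beq : Proc → Proc → Prop
  beq_equiv : Equivalence beq
  /-- `beq` is reduction sensitive -/
  beq_reduction_sensitive : ∀ {P Q}, beq P Q → Reduces P → Reduces Q
  /-- `beq` is success sensitive -/
  beq_success_sensitive : ∀ {P Q}, beq P Q → (MaySucceed P ↔ MaySucceed Q)
  /-- compositionality, for each operator of the source language -/
  comp_nil : ∃ C : Ctx 0, enc .nil = C.fill ![]
  comp_succ : ∃ C : Ctx 0, enc .succ = C.fill ![]
  comp_out : ∀ (ch : Option Term) (ts : List Term) (N : Finset Name), ∃ C : Ctx 1,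
      ∀ S, S.WF F₁ → S.fnames = N → enc (.out ch ts S) = C.fill ![enc S]
  comp_inp : ∀ (J : List (Option Term × List Pat)) (N : Finset Name), ∃ C : Ctx 1,
      ∀ S, S.WF F₁ → S.fnames = N → enc (.inp J S) = C.fill ![enc S]
  comp_res : ∀ (a : Name) (N : Finset Name), ∃ C : Ctx 1,
      ∀ S, S.WF F₁ → S.fnames = N → enc (.res a S) = C.fill ![enc S]
  comp_repl : ∀ (N : Finset Name), ∃ C : Ctx 1,
      ∀ S, S.WF F₁ → S.fnames = N → enc (.repl S) = C.fill ![enc S]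
  comp_par : ∀ (N : Finset Name), ∃ C : Ctx 2,
      ∀ S₁ S₂, S₁.WF F₁ → S₂.WF F₁ → S₁.fnames ∪ S₂.fnames = N →
        enc (.par S₁ S₂) = C.fill ![enc S₁, enc S₂]
  comp_ite : ∀ (s t : Term) (N : Finset Name), ∃ C : Ctx 2,
      ∀ S₁ S₂, S₁.WF F₁ → S₂.WF F₁ → S₁.fnames ∪ S₂.fnames = N →
        enc (.ite s t S₁ S₂) = C.fill ![enc S₁, enc S₂]
  /-- name invariance -/
  name_invariance : ∀ σ : Name → Name, ∃ σ' : Name → Name,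
      (∀ a, φ (σ a) = (φ a).map σ') ∧
      ∀ S, S.WF F₁ →
        (Function.Injective σ → enc (nsub σ S) = nsub σ' (enc S)) ∧
        (¬ Function.Injective σ → beq (enc (nsub σ S)) (nsub σ' (enc S)))
  /-- operational correspondence: completeness -/
  op_complete : ∀ S S', S.WF F₁ → Reds S S' →
      ∃ T, Reds (enc S) T ∧ beq T (enc S')
  /-- operational correspondence: soundness -/
  op_sound : ∀ S T, S.WF F₁ → Reds (enc S) T →
      ∃ S' T', Reds S S' ∧ Reds T T' ∧ beq T' (enc S')
  /-- divergence reflection -/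
  divergence_reflection : ∀ S, S.WF F₁ → Diverges (enc S) → Diverges S
  /-- success sensitiveness -/
  success_sensitive : ∀ S, S.WF F₁ → (MaySucceed S ↔ MaySucceed (enc S))

/-! ### Coordination degree -/

/-- `n` processes of `L_F` must coordinate to yield a reduction:
there are `n` well-formed processes whose parallel composition reduces,
but replacing any one of them by `0` removes all reductions. -/
def MustCoordinate (F : Features) (n : ℕ) : Prop :=
  ∃ S : Fin n → Proc, (∀ i, (S i).WF F) ∧
    Reduces (parList (List.ofFn S)) ∧
    ∀ j : Fin n, ¬ Reduces (parList (List.ofFn (Function.update S j Proc.nil)))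

/-- The coordination degree of `L_F`: the least upper bound of the numbers of
processes that must coordinate to yield a reduction. -/
noncomputable def coordDeg (F : Features) : ℕ∞ :=
  sSup {x : ℕ∞ | ∃ n : ℕ, x = (n : ℕ∞) ∧ MustCoordinate F n}

end Coordination

namespace Coordination

-- AUX START
/-! ### Auxiliary machinery -/

/-- Name-renaming substitution. -/
abbrev nm (f : Name → Name) : Sub := fun x => Term.name (f x)

/-- Single-name renaming as a function. -/
def rr (a b : Name) : Name → Name := fun x => if x = a then b else x

lemma ren1_eq_nm (a b : Name) : ren1 a b = nm (rr a b) := by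
  funext x; simp [ren1, nm, rr]; split <;> rfl

lemma shadow_nm (f : Name → Name) (bs : List Name) :
    shadow (nm f) bs = nm (fun x => if x ∈ bs then x else f x) := by
  funext x; simp only [shadow, nm]; split <;> rfl

lemma term_subst_nm_names (f : Name → Name) (t : Term) :
    (t.subst (nm f)).names = t.names.image f := by
  induction t with
  | name a => simp [Term.subst, Term.names, nm]
  | comp s t ihs iht => simp [Term.subst, Term.names, ihs, iht, Finset.image_union]

lemma term_subst_congr {σ τ : Sub} (t : Term) (h : ∀ x ∈ t.names, σ x = τ x) :
    t.subst σ = t.subst τ := by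
  induction t with
  | name a => exact h a (by simp [Term.names])
  | comp s t ihs iht =>
      simp only [Term.subst]
      rw [ihs fun x hx => h x (by simp [Term.names, hx]),
          iht fun x hx => h x (by simp [Term.names, hx])]

lemma term_subst_id (t : Term) : t.subst (nm id) = t := by
  induction t with
  | name a => rfl
  | comp s t ihs iht => simp only [Term.subst]; rw [ihs, iht]

lemma term_subst_fresh {f : Name → Name} (t : Term) (h : ∀ x ∈ t.names, f x = x) :
    t.subst (nm f) = t := by
  rw [term_subst_congr t (τ := nm id) (fun x hx => by simp [nm, h x hx])]
  exact term_subst_id t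

lemma term_subst_subst_id {f g : Name → Name} (t : Term)
    (h : ∀ x ∈ t.names, g (f x) = x) :
    (t.subst (nm f)).subst (nm g) = t := by
  induction t with
  | name a => simpa [Term.subst, nm] using congrArg Term.name (h a (by simp [Term.names]))
  | comp s t ihs iht =>
      simp only [Term.subst]
      rw [ihs fun x hx => h x (by simp [Term.names, hx]),
          iht fun x hx => h x (by simp [Term.names, hx])]

/-- Round-trip lemma: a two-sided rename is pointwise invertible on names. -/
lemma term_roundtrip {f g : Name → Name} (t : Term)
    (h : (t.subst (nm f)).subst (nm g) = t) : ∀ x ∈ t.names, g (f x) = x := by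
  induction t with
  | name a =>
      intro x hx
      simp [Term.names] at hx; subst hx
      simpa [Term.subst, nm, Term.name.injEq] using h
  | comp s t ihs iht =>
      intro x hx
      simp only [Term.subst, Term.comp.injEq] at h
      simp [Term.names] at hx
      rcases hx with hx | hx
      · exact ihs h.1 x hx
      · exact iht h.2 x hx

lemma toMatchPat_name (a : Name) : (Term.name a).toMatchPat = .nmatch a := rfl

lemma pat_subst_binds (σ : Sub) (p : Pat) : (p.subst σ).binds = p.binds := by
  induction p with
  | bind x => rfl
  | nmatch a =>
      show (σ a).toMatchPat.binds = []
      generalize σ a = t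
      induction t with
      | name b => rfl
      | comp s t ihs iht => simp [Term.toMatchPat, Pat.binds, ihs, iht]
  | comp p q ihp ihq => simp [Pat.subst, Pat.binds, ihp, ihq]

lemma joinBinds_cons (j) (J : List (Option Term × List Pat)) :
    joinBinds (j :: J) = (j.2.foldr (fun p b => p.binds ++ b) []) ++ joinBinds J := rfl

lemma joinBinds_map_subst (σ : Sub) (J : List (Option Term × List Pat)) :
    joinBinds (J.map fun j => (j.1.map (Term.subst σ), j.2.map (Pat.subst σ)))
      = joinBinds J := by
  induction J with
  | nil => rfl
  | cons j J ih =>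
      simp only [List.map_cons, joinBinds_cons, ih]
      congr 1
      induction j.2 with
      | nil => rfl
      | cons p ps ihp => simp [List.foldr_cons, pat_subst_binds, ihp]

lemma joinBinds_renameBind (x b : Name) (J : List (Option Term × List Pat)) :
    joinBinds (renameBindJoin x b J) = (joinBinds J).map (fun y => if y = x then b else y) := by
  induction J with
  | nil => rfl
  | cons j J ih =>
      simp only [renameBindJoin, List.map_cons, joinBinds_cons] at *
      rw [List.map_append, ← ih]
      congr 1
      induction j.2 with
      | nil => rfl
      | cons p ps ihp =>
          simp only [List.map_cons, List.foldr_cons, List.map_append, ← ihp]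
          congr 1
          induction p with
          | bind y => by_cases h : y = x <;> simp [renameBindPat, Pat.binds, h]
          | nmatch a => rfl
          | comp p q ihq ihr => simp [renameBindPat, Pat.binds, ihq, ihr]

lemma pat_subst_subst_id {f g : Name → Name} (p : Pat)
    (h : ∀ x ∈ p.frees, g (f x) = x) : (p.subst (nm f)).subst (nm g) = p := by
  induction p with
  | bind x => rfl
  | nmatch a =>
      have : g (f a) = a := h a (by simp [Pat.frees])
      simp [Pat.subst, nm, toMatchPat_name, this]
  | comp p q ihp ihq =>
      simp only [Pat.subst, Pat.comp.injEq]
      exact ⟨ihp fun x hx => h x (by simp [Pat.frees, hx]),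
             ihq fun x hx => h x (by simp [Pat.frees, hx])⟩

lemma mem_foldr_names {x : Name} {ts : List Term} {t : Term} (ht : t ∈ ts)
    (hx : x ∈ t.names) : x ∈ ts.foldr (fun t a => t.names ∪ a) ∅ := by
  induction ts with
  | nil => cases ht
  | cons s ss ih =>
      simp only [List.foldr_cons, Finset.mem_union]
      rcases List.mem_cons.mp ht with h | h
      · exact Or.inl (h ▸ hx)
      · exact Or.inr (ih h)

lemma mem_joinFrees_chan {J : List (Option Term × List Pat)} {j} (hj : j ∈ J)
    {x} (hx : x ∈ optNames j.1) : x ∈ joinFrees J := by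
  induction J with
  | nil => cases hj
  | cons k K ih =>
      show x ∈ optNames k.1 ∪ _ ∪ joinFrees K
      simp only [Finset.mem_union]
      rcases List.mem_cons.mp hj with h | h
      · exact Or.inl (Or.inl (h ▸ hx))
      · exact Or.inr (ih h)

lemma mem_foldr_frees {x : Name} {ps : List Pat} {p : Pat} (hp : p ∈ ps)
    (hx : x ∈ p.frees) : x ∈ ps.foldr (fun p b => p.frees ∪ b) ∅ := by
  induction ps with
  | nil => cases hp
  | cons q qs ihq =>
      simp only [List.foldr_cons, Finset.mem_union]
      rcases List.mem_cons.mp hp with h | h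
      · exact Or.inl (h ▸ hx)
      · exact Or.inr (ihq h)

lemma mem_joinFrees_pat {J : List (Option Term × List Pat)} {j} (hj : j ∈ J)
    {p} (hp : p ∈ j.2) {x} (hx : x ∈ p.frees) : x ∈ joinFrees J := by
  induction J with
  | nil => cases hj
  | cons k K ih =>
      show x ∈ optNames k.1 ∪ _ ∪ joinFrees K
      simp only [Finset.mem_union]
      rcases List.mem_cons.mp hj with h | h
      · exact Or.inl (Or.inr (by subst h; exact mem_foldr_frees hp hx))
      · exact Or.inr (ih h)

lemma mem_foldr_binds {x : Name} {ps : List Pat} {p : Pat} (hp : p ∈ ps)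
    (hx : x ∈ p.binds) : x ∈ ps.foldr (fun p b => p.binds ++ b) [] := by
  induction ps with
  | nil => cases hp
  | cons q qs ihq =>
      simp only [List.foldr_cons, List.mem_append]
      rcases List.mem_cons.mp hp with h | h
      · exact Or.inl (h ▸ hx)
      · exact Or.inr (ihq h)

lemma mem_joinBinds {J : List (Option Term × List Pat)} {j} (hj : j ∈ J)
    {p} (hp : p ∈ j.2) {x} (hx : x ∈ p.binds) : x ∈ joinBinds J := by
  induction J with
  | nil => cases hj
  | cons k K ih =>
      simp only [joinBinds_cons, List.mem_append]
      rcases List.mem_cons.mp hj with h | h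
      · exact Or.inl (by subst h; exact mem_foldr_binds hp hx)
      · exact Or.inr (ih h)

lemma list_map_self {α} (l : List α) (h : α → α) (H : ∀ x ∈ l, h x = x) : l.map h = l := by
  induction l with
  | nil => rfl
  | cons a as ih =>
      simp only [List.map_cons, List.cons.injEq]
      exact ⟨H a (by simp), ih fun x hx => H x (by simp [hx])⟩

lemma list_map_id' {α} {l : List α} {h : α → α} (H : l.map h = l) : ∀ x ∈ l, h x = x := by
  induction l with
  | nil => intro x hx; cases hx
  | cons a as ih =>
      simp only [List.map_cons, List.cons.injEq] at H
      intro x hx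
      rcases List.mem_cons.mp hx with h' | h'
      · subst h'; exact H.1
      · exact ih H.2 x h'

/-- A two-sided renaming (w.r.t. a superset `A` of the names of `P`)
is undone by its inverse. -/
lemma proc_subst_subst_id (A : Finset Name) :
    ∀ (P : Proc), P.anames ⊆ A → ∀ (f g : Name → Name),
      (∀ x ∈ A, g (f x) = x) → (∀ x ∈ A, f x = x ∨ f x ∉ A) →
      (P.subst (nm f)).subst (nm g) = P := by
  intro P
  induction P with
  | nil => intros; rfl
  | succ => intros; rfl
  | out ch ts Pc ih =>
      intro hA f g h1 h2
      have hsub : Pc.anames ⊆ A := fun x hx => hA (by simp [Proc.anames, hx])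
      simp only [Proc.subst, Proc.out.injEq]
      refine ⟨?_, ?_, ih hsub f g h1 h2⟩
      · cases ch with
        | none => rfl
        | some t =>
            exact congrArg some (term_subst_subst_id t fun x hx =>
              h1 x (hA (by simp [Proc.anames, optNames, hx])))
      · rw [List.map_map]
        exact list_map_self _ _ fun t ht => term_subst_subst_id t fun x hx =>
          h1 x (hA (by
            simp only [Proc.anames, Finset.mem_union]
            exact Or.inl (Or.inr (mem_foldr_names ht hx))))
  | inp J Pc ih =>
      intro hA f g h1 h2
      have hsub : Pc.anames ⊆ A := fun x hx => hA (by simp [Proc.anames, hx])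
      have hbs : ∀ y ∈ joinBinds J, y ∈ A := fun y hy => hA (by
        simp only [Proc.anames, Finset.mem_union]
        exact Or.inl (Or.inr (List.mem_toFinset.mpr hy)))
      simp only [Proc.subst, joinBinds_map_subst, Proc.inp.injEq]
      constructor
      · rw [List.map_map]
        refine list_map_self _ _ fun j hj => ?_
        have hch : (j.1.map (Term.subst (nm f))).map (Term.subst (nm g)) = j.1 := by
          cases hj1 : j.1 with
          | none => rfl
          | some t =>
              exact congrArg some (term_subst_subst_id t fun x hx =>
                h1 x (hA (by
                  simp only [Proc.anames, Finset.mem_union]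
                  exact Or.inl (Or.inl (mem_joinFrees_chan hj (by rw [hj1]; exact hx))))))
        have hps : (j.2.map (Pat.subst (nm f))).map (Pat.subst (nm g)) = j.2 := by
          rw [List.map_map]
          exact list_map_self _ _ fun p hp => pat_subst_subst_id p fun x hx =>
            h1 x (hA (by
              simp only [Proc.anames, Finset.mem_union]
              exact Or.inl (Or.inl (mem_joinFrees_pat hj hp hx))))
        calc (fun j => (j.1.map (Term.subst (nm g)), j.2.map (Pat.subst (nm g))))
              ((fun j => (j.1.map (Term.subst (nm f)), j.2.map (Pat.subst (nm f)))) j)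
            = ((j.1.map (Term.subst (nm f))).map (Term.subst (nm g)),
               (j.2.map (Pat.subst (nm f))).map (Pat.subst (nm g))) := rfl
          _ = j := by rw [hch, hps]
      · rw [shadow_nm, shadow_nm]
        set bs := joinBinds J with hbsdef
        refine ih hsub _ _ ?_ ?_
        · intro x hxA
          by_cases hxb : x ∈ bs
          · simp [hxb]
          · simp only [if_neg hxb]
            have hfx : f x ∉ bs := by
              intro hfb
              rcases h2 x hxA with h | h
              · exact hxb (h ▸ hfb)
              · exact h (hbs _ hfb)
            simp [if_neg hfx, h1 x hxA]
        · intro x hxA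
          by_cases hxb : x ∈ bs
          · simp [hxb]
          · simp only [if_neg hxb]
            rcases h2 x hxA with h | h
            · exact Or.inl h
            · exact Or.inr h
  | res a Pc ih =>
      intro hA f g h1 h2
      have hsub : Pc.anames ⊆ A := fun x hx => hA (by simp [Proc.anames, hx])
      have haA : a ∈ A := hA (by simp [Proc.anames])
      simp only [Proc.subst, Proc.res.injEq, true_and]
      rw [shadow_nm, shadow_nm]
      refine ih hsub _ _ ?_ ?_
      · intro x hxA
        by_cases hxb : x = a
        · simp [hxb]
        · simp only [List.mem_singleton, if_neg hxb]
          have hfx : f x ≠ a := by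
            intro hfb
            rcases h2 x hxA with h | h
            · exact hxb (h ▸ hfb)
            · exact h (hfb ▸ haA)
          simp [if_neg hfx, h1 x hxA]
      · intro x hxA
        by_cases hxb : x = a
        · simp [hxb]
        · simp only [List.mem_singleton, if_neg hxb]
          rcases h2 x hxA with h | h
          · exact Or.inl h
          · exact Or.inr h
  | par P Q ihP ihQ =>
      intro hA f g h1 h2
      simp only [Proc.subst, Proc.par.injEq]
      exact ⟨ihP (fun x hx => hA (by simp [Proc.anames, hx])) f g h1 h2,
             ihQ (fun x hx => hA (by simp [Proc.anames, hx])) f g h1 h2⟩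
  | ite s t P Q ihP ihQ =>
      intro hA f g h1 h2
      simp only [Proc.subst, Proc.ite.injEq]
      refine ⟨?_, ?_, ?_, ?_⟩
      · exact term_subst_subst_id s fun x hx => h1 x (hA (by simp [Proc.anames, hx]))
      · exact term_subst_subst_id t fun x hx => h1 x (hA (by simp [Proc.anames, hx]))
      · exact ihP (fun x hx => hA (by simp [Proc.anames, hx])) f g h1 h2
      · exact ihQ (fun x hx => hA (by simp [Proc.anames, hx])) f g h1 h2
  | repl P ihP =>
      intro hA f g h1 h2
      simp only [Proc.subst, Proc.repl.injEq]
      exact ihP (fun x hx => hA (by simp [Proc.anames, hx])) f g h1 h2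

/-- Renaming a fresh name `b` for `a` is undone by the reverse renaming. -/
lemma subst_double {b : Name} (P : Proc) (hb : b ∉ P.anames) (a : Name) :
    (P.subst (ren1 a b)).subst (ren1 b a) = P := by
  rw [ren1_eq_nm, ren1_eq_nm]
  refine proc_subst_subst_id P.anames P (fun x hx => hx) (rr a b) (rr b a) ?_ ?_
  · intro x hx
    have hxb : x ≠ b := fun h => hb (h ▸ hx)
    by_cases hxa : x = a
    · subst hxa; simp [rr]
    · simp [rr, hxa, hxb]
  · intro x hx
    by_cases hxa : x = a
    · subst hxa
      simp only [rr, if_pos rfl]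
      by_cases hab : x = b
      · exact Or.inl hab.symm
      · exact Or.inr hb
    · exact Or.inl (by simp [rr, hxa])

/-! ### Exposure measures -/

/-- Number of top-level unguarded outputs (`⊤` under replication). -/
def oCnt : Proc → ℕ∞
  | .nil => 0
  | .out _ _ _ => 1
  | .inp _ _ => 0
  | .res _ P => oCnt P
  | .par P Q => oCnt P + oCnt Q
  | .ite s t P Q => if s = t then oCnt P else oCnt Q
  | .repl P => if oCnt P = 0 then 0 else ⊤
  | .succ => 0

/-- Lengths of top-level unguarded joins. -/
def jSet : Proc → Set ℕ
  | .nil => ∅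
  | .out _ _ _ => ∅
  | .inp J _ => {J.length}
  | .res _ P => jSet P
  | .par P Q => jSet P ∪ jSet Q
  | .ite s t P Q => if s = t then jSet P else jSet Q
  | .repl P => jSet P
  | .succ => ∅

/-- Is a `✓` exposed at top level? -/
def sExp : Proc → Prop
  | .nil => False
  | .out _ _ _ => False
  | .inp _ _ => False
  | .res _ P => sExp P
  | .par P Q => sExp P ∨ sExp Q
  | .ite s t P Q => if s = t then sExp P else sExp Q
  | .repl P => sExp P
  | .succ => True

/-- Channels of top-level unguarded outputs (not mentioning a restricted name). -/
def oCh : Proc → Set (Option Term)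
  | .nil => ∅
  | .out ch _ _ => {ch}
  | .inp _ _ => ∅
  | .res a P => {c ∈ oCh P | a ∉ optNames c}
  | .par P Q => oCh P ∪ oCh Q
  | .ite s t P Q => if s = t then oCh P else oCh Q
  | .repl P => oCh P
  | .succ => ∅

/-- Channels of top-level unguarded joins (not mentioning a restricted name). -/
def iCh : Proc → Set (Option Term)
  | .nil => ∅
  | .out _ _ _ => ∅
  | .inp J _ => {c | ∃ j ∈ J, j.1 = c}
  | .res a P => {c ∈ iCh P | a ∉ optNames c}
  | .par P Q => iCh P ∪ iCh Q
  | .ite s t P Q => if s = t then iCh P else iCh Q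
  | .repl P => iCh P
  | .succ => ∅

/-- Is there a matching exposed output/join channel pair hidden under a
restriction or replication? -/
def ip : Proc → Prop
  | .nil => False
  | .out _ _ _ => False
  | .inp _ _ => False
  | .res a P => ip P ∨ ∃ c, c ∈ oCh P ∧ c ∈ iCh P ∧ a ∈ optNames c
  | .par P Q => ip P ∨ ip Q ∨ ∃ c, (c ∈ oCh P ∧ c ∈ iCh Q) ∨ (c ∈ oCh Q ∧ c ∈ iCh P)
  | .ite s t P Q => if s = t then ip P else ip Q
  | .repl P => ip P ∨ ∃ c, c ∈ oCh P ∧ c ∈ iCh P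
  | .succ => False

/-- A matching channel pair is exposed. -/
def pairFire (P : Proc) : Prop := ip P ∨ ∃ c, c ∈ oCh P ∧ c ∈ iCh P

/-- A redex is exposed: a join of length `i` together with at least `i` outputs. -/
def canFire (P : Proc) : Prop := ∃ i : ℕ, i ∈ jSet P ∧ 1 ≤ i ∧ (i : ℕ∞) ≤ oCnt P

lemma och_names : ∀ (P : Proc), (∀ c ∈ oCh P, optNames c ⊆ P.fnames) ∧
    (∀ c ∈ iCh P, optNames c ⊆ P.fnames) := by
  intro P
  induction P with
  | nil => exact ⟨fun c hc => absurd hc (by simp [oCh]), fun c hc => absurd hc (by simp [iCh])⟩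
  | succ => exact ⟨fun c hc => absurd hc (by simp [oCh]), fun c hc => absurd hc (by simp [iCh])⟩
  | out ch ts Pc ih =>
      refine ⟨fun c hc => ?_, fun c hc => absurd hc (by simp [iCh])⟩
      simp only [oCh, Set.mem_singleton_iff] at hc
      subst hc
      intro x hx
      simp [Proc.fnames, hx]
  | inp J Pc ih =>
      refine ⟨fun c hc => absurd hc (by simp [oCh]), fun c hc => ?_⟩
      simp only [iCh, Set.mem_setOf_eq] at hc
      obtain ⟨j, hj, rfl⟩ := hc
      intro x hx
      simp only [Proc.fnames, Finset.mem_union]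
      exact Or.inl (mem_joinFrees_chan hj hx)
  | res a Pc ih =>
      constructor
      · intro c hc
        simp only [oCh, Set.mem_setOf_eq] at hc
        intro x hx
        simp only [Proc.fnames, Finset.mem_erase]
        exact ⟨fun h => hc.2 (h ▸ hx), ih.1 c hc.1 hx⟩
      · intro c hc
        simp only [iCh, Set.mem_setOf_eq] at hc
        intro x hx
        simp only [Proc.fnames, Finset.mem_erase]
        exact ⟨fun h => hc.2 (h ▸ hx), ih.2 c hc.1 hx⟩
  | par P Q ihP ihQ =>
      constructor
      · intro c hc x hx
        simp only [Proc.fnames, Finset.mem_union]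
        rcases hc with hc | hc
        · exact Or.inl (ihP.1 c hc hx)
        · exact Or.inr (ihQ.1 c hc hx)
      · intro c hc x hx
        simp only [Proc.fnames, Finset.mem_union]
        rcases hc with hc | hc
        · exact Or.inl (ihP.2 c hc hx)
        · exact Or.inr (ihQ.2 c hc hx)
  | ite s t P Q ihP ihQ =>
      by_cases h : s = t
      · constructor
        · intro c hc x hx
          simp only [oCh, if_pos h] at hc
          simp only [Proc.fnames, Finset.mem_union]
          exact Or.inl (Or.inr (ihP.1 c hc hx))
        · intro c hc x hx
          simp only [iCh, if_pos h] at hc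
          simp only [Proc.fnames, Finset.mem_union]
          exact Or.inl (Or.inr (ihP.2 c hc hx))
      · constructor
        · intro c hc x hx
          simp only [oCh, if_neg h] at hc
          simp only [Proc.fnames, Finset.mem_union]
          exact Or.inr (ihQ.1 c hc hx)
        · intro c hc x hx
          simp only [iCh, if_neg h] at hc
          simp only [Proc.fnames, Finset.mem_union]
          exact Or.inr (ihQ.2 c hc hx)
  | repl P ihP => exact ihP

/-- Renaming on optional terms. -/
abbrev omap (f : Name → Name) : Option Term → Option Term :=
  Option.map (Term.subst (nm f))

lemma optNames_omap (f : Name → Name) (c : Option Term) :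
    optNames (omap f c) = (optNames c).image f := by
  cases c <;> simp [optNames, omap, term_subst_nm_names]

lemma omap_roundtrip_names {f g : Name → Name} {c : Option Term}
    (h : omap g (omap f c) = c) : ∀ x ∈ optNames c, g (f x) = x := by
  cases c with
  | none => intro x hx; simp [optNames] at hx
  | some t =>
      simp only [omap, Option.map_some, Option.some.injEq] at h
      exact term_roundtrip t h

lemma omap_congr {f f' : Name → Name} {c : Option Term}
    (h : ∀ x ∈ optNames c, f x = f' x) : omap f c = omap f' c := by
  cases c with
  | none => rfl
  | some t =>
      simp only [omap, Option.map_some, Option.some.injEq]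
    
      exact term_subst_congr t fun x hx => by simp [nm, h x hx]

/-- Transfer facts for renaming under one restriction binder. -/
lemma resTransfer {f g f' g' : Name → Name} {a : Name}
    (hf' : ∀ x, f' x = if x = a then a else f x)
    (hg' : ∀ x, g' x = if x = a then a else g x)
    (S : Set (Option Term))
    (hrt : ∀ c ∈ S, omap g' (omap f' c) = c) :
    (∀ c ∈ S, (a ∈ optNames (omap f' c) ↔ a ∈ optNames c)) ∧
    (∀ c ∈ S, a ∉ optNames c → omap f' c = omap f c) ∧
    (∀ c ∈ S, a ∉ optNames c → omap g (omap f c) = c) ∧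
    ({y ∈ omap f' '' S | a ∉ optNames y} = omap f '' {c ∈ S | a ∉ optNames c}) := by
  have htrans : ∀ c ∈ S, (a ∈ optNames (omap f' c) ↔ a ∈ optNames c) := by
    intro c hc
    rw [optNames_omap]
    constructor
    · intro h
      obtain ⟨x, hx, hfx⟩ := Finset.mem_image.mp h
      by_cases hxa : x = a
      · exact hxa ▸ hx
      · exfalso
        have hpt := omap_roundtrip_names (hrt c hc) x hx
        rw [hfx, hg'] at hpt
        simp only [if_pos rfl] at hpt
        exact hxa hpt.symm
    · intro h
      exact Finset.mem_image.mpr ⟨a, h, by rw [hf']; simp⟩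
  have hagree : ∀ c ∈ S, a ∉ optNames c → omap f' c = omap f c := by
    intro c hc ha
    refine omap_congr fun x hx => ?_
    rw [hf']
    exact if_neg (fun hcontra : x = a => ha (hcontra ▸ hx))
  have hrtf : ∀ c ∈ S, a ∉ optNames c → omap g (omap f c) = c := by
    intro c hc ha
    rw [← hagree c hc ha]
    rw [show omap g (omap f' c) = omap g' (omap f' c) from ?_]
    · exact hrt c hc
    · refine omap_congr fun x hx => ?_
      have hxa : x ≠ a := by
        intro h
        subst h
        exact ha ((htrans c hc).mp hx)
      rw [hg', if_neg hxa]
  refine ⟨htrans, hagree, hrtf, ?_⟩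
  ext y
  simp only [Set.mem_setOf_eq, Set.mem_image]
  constructor
  · rintro ⟨⟨c, hc, rfl⟩, hay⟩
    have ha : a ∉ optNames c := fun h => hay ((htrans c hc).mpr h)
    exact ⟨c, ⟨hc, ha⟩, (hagree c hc ha).symm⟩
  · rintro ⟨c, ⟨hc, ha⟩, rfl⟩
    rw [← hagree c hc ha]
    exact ⟨⟨c, hc, rfl⟩, fun h => ha ((htrans c hc).mp h)⟩

/-- The main renaming-invariance lemma: a two-sided renaming preserves all
exposure measures. -/
lemma subinv : ∀ (P : Proc) (f g : Name → Name),
    (P.subst (nm f)).subst (nm g) = P →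
    oCnt (P.subst (nm f)) = oCnt P ∧
    jSet (P.subst (nm f)) = jSet P ∧
    (sExp (P.subst (nm f)) ↔ sExp P) ∧
    oCh (P.subst (nm f)) = omap f '' oCh P ∧
    iCh (P.subst (nm f)) = omap f '' iCh P ∧
    (∀ c, (c ∈ oCh P ∨ c ∈ iCh P) → omap g (omap f c) = c) ∧
    (ip (P.subst (nm f)) ↔ ip P) := by
  intro P
  induction P with
  | nil =>
      intro f g h
      simp [Proc.subst, oCnt, jSet, sExp, oCh, iCh, ip]
  | succ =>
      intro f g h
      simp [Proc.subst, oCnt, jSet, sExp, oCh, iCh, ip]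
  | out ch ts Pc ih =>
      intro f g h
      simp only [Proc.subst, Proc.out.injEq] at h
      refine ⟨rfl, rfl, Iff.rfl, ?_, ?_, ?_, Iff.rfl⟩
      · simp [Proc.subst, oCh]
      · simp [Proc.subst, iCh]
      · intro c hc
        rcases hc with hc | hc
        · simp only [oCh, Set.mem_singleton_iff] at hc
          subst hc
          exact h.1
        · simp [iCh] at hc
  | inp J Pc ih =>
      intro f g h
      simp only [Proc.subst, Proc.inp.injEq] at h
      refine ⟨rfl, ?_, Iff.rfl, ?_, ?_, ?_, Iff.rfl⟩
      · simp [Proc.subst, jSet]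
      · simp [Proc.subst, oCh]
      · show iCh (Proc.inp _ _) = _
        simp only [iCh]
        ext c
        simp only [Set.mem_setOf_eq, List.mem_map, Set.mem_image]
        constructor
        · rintro ⟨j', ⟨j, hj, rfl⟩, rfl⟩
          exact ⟨j.1, ⟨j, hj, rfl⟩, rfl⟩
        · rintro ⟨c₀, ⟨j, hj, rfl⟩, rfl⟩
          exact ⟨_, ⟨j, hj, rfl⟩, rfl⟩
      · intro c hc
        rcases hc with hc | hc
        · simp [oCh] at hc
        · simp only [iCh, Set.mem_setOf_eq] at hc
          obtain ⟨j, hj, rfl⟩ := hc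
          have := h.1
          rw [List.map_map] at this
          have hjj := list_map_id' this j hj
          have : (j.1.map (Term.subst (nm f))).map (Term.subst (nm g)) = j.1 := by
            have := congrArg Prod.fst hjj
            simpa using this
          simpa [omap, Option.map_map] using this
  | res a Pc ih =>
      intro f g h
      simp only [Proc.subst, Proc.res.injEq, true_and, shadow_nm] at h ⊢
      set f' : Name → Name := fun x => if x ∈ [a] then x else f x with hf'def
      set g' : Name → Name := fun x => if x ∈ [a] then x else g x with hg'def
      have hf' : ∀ x, f' x = if x = a then a else f x := by
        intro x; simp only [hf'def, List.mem_singleton]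
        by_cases hx : x = a <;> simp [hx]
      have hg' : ∀ x, g' x = if x = a then a else g x := by
        intro x; simp only [hg'def, List.mem_singleton]
        by_cases hx : x = a <;> simp [hx]
      obtain ⟨ho, hj, hs, hoch, hich, hrt, hip⟩ := ih f' g' h
      have hrtO : ∀ c ∈ oCh Pc, omap g' (omap f' c) = c := fun c hc => hrt c (Or.inl hc)
      have hrtI : ∀ c ∈ iCh Pc, omap g' (omap f' c) = c := fun c hc => hrt c (Or.inr hc)
      obtain ⟨htransO, hagreeO, hrtfO, hsetO⟩ := resTransfer hf' hg' (oCh Pc) hrtO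
      obtain ⟨htransI, hagreeI, hrtfI, hsetI⟩ := resTransfer hf' hg' (iCh Pc) hrtI
      refine ⟨ho, hj, hs, ?_, ?_, ?_, ?_⟩
      · show {c ∈ oCh (Pc.subst (nm f')) | a ∉ optNames c} = _
        rw [hoch]
        exact hsetO
      · show {c ∈ iCh (Pc.subst (nm f')) | a ∉ optNames c} = _
        rw [hich]
        exact hsetI
      · intro c hc
        rcases hc with hc | hc
        · simp only [oCh, Set.mem_setOf_eq] at hc
          exact hrtfO c hc.1 hc.2
        · simp only [iCh, Set.mem_setOf_eq] at hc
          exact hrtfI c hc.1 hc.2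
      · show (ip (Pc.subst (nm f')) ∨ ∃ c, c ∈ oCh (Pc.subst (nm f')) ∧
              c ∈ iCh (Pc.subst (nm f')) ∧ a ∈ optNames c) ↔
              (ip Pc ∨ ∃ c, c ∈ oCh Pc ∧ c ∈ iCh Pc ∧ a ∈ optNames c)
        rw [hoch, hich]
        refine or_congr hip ?_
        constructor
        · rintro ⟨c, ⟨c₁, hc₁, rfl⟩, ⟨c₂, hc₂, hc₂eq⟩, hac⟩
          have hceq : c₁ = c₂ := by
            rw [← hrtO c₁ hc₁, ← hc₂eq, hrtI c₂ hc₂]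
          exact ⟨c₁, hc₁, hceq ▸ hc₂, (htransO c₁ hc₁).mp hac⟩
        · rintro ⟨c, hc₁, hc₂, hac⟩
          exact ⟨omap f' c, ⟨c, hc₁, rfl⟩, ⟨c, hc₂, rfl⟩, (htransO c hc₁).mpr hac⟩
  | par P Q ihP ihQ =>
      intro f g h
      simp only [Proc.subst, Proc.par.injEq] at h
      obtain ⟨hoP, hjP, hsP, hochP, hichP, hrtP, hipP⟩ := ihP f g h.1
      obtain ⟨hoQ, hjQ, hsQ, hochQ, hichQ, hrtQ, hipQ⟩ := ihQ f g h.2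
      refine ⟨?_, ?_, ?_, ?_, ?_, ?_, ?_⟩
      · show oCnt _ + oCnt _ = _
        rw [hoP, hoQ]; rfl
      · show jSet _ ∪ jSet _ = _
        rw [hjP, hjQ]; rfl
      · show sExp _ ∨ sExp _ ↔ sExp _ ∨ sExp _
        exact or_congr hsP hsQ
      · show oCh _ ∪ oCh _ = _
        rw [hochP, hochQ, ← Set.image_union]; rfl
      · show iCh _ ∪ iCh _ = _
        rw [hichP, hichQ, ← Set.image_union]; rfl
      · intro c hc
        rcases hc with hc | hc
        · rcases hc with hc | hc
          · exact hrtP c (Or.inl hc)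
          · exact hrtQ c (Or.inl hc)
        · rcases hc with hc | hc
          · exact hrtP c (Or.inr hc)
          · exact hrtQ c (Or.inr hc)
      · show (ip _ ∨ ip _ ∨ ∃ c, _) ↔ _
        rw [hochP, hochQ, hichP, hichQ]
        refine or_congr hipP (or_congr hipQ ?_)
        constructor
        · rintro ⟨c, ⟨⟨c₁, hc₁, rfl⟩, c₂, hc₂, hc₂eq⟩ | ⟨⟨c₁, hc₁, rfl⟩, c₂, hc₂, hc₂eq⟩⟩
          · have hcc : c₁ = c₂ := by
              rw [← hrtP c₁ (Or.inl hc₁), ← hc₂eq, hrtQ c₂ (Or.inr hc₂)]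
            exact ⟨c₁, Or.inl ⟨hc₁, hcc ▸ hc₂⟩⟩
          · have hcc : c₁ = c₂ := by
              rw [← hrtQ c₁ (Or.inl hc₁), ← hc₂eq, hrtP c₂ (Or.inr hc₂)]
            exact ⟨c₁, Or.inr ⟨hc₁, hcc ▸ hc₂⟩⟩
        · rintro ⟨c, ⟨hc₁, hc₂⟩ | ⟨hc₁, hc₂⟩⟩
          · exact ⟨omap f c, Or.inl ⟨⟨c, hc₁, rfl⟩, ⟨c, hc₂, rfl⟩⟩⟩
          · exact ⟨omap f c, Or.inr ⟨⟨c, hc₁, rfl⟩, ⟨c, hc₂, rfl⟩⟩⟩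
  | ite s t P Q ihP ihQ =>
      intro f g h
      simp only [Proc.subst, Proc.ite.injEq] at h
      obtain ⟨hoP, hjP, hsP, hochP, hichP, hrtP, hipP⟩ := ihP f g h.2.2.1
      obtain ⟨hoQ, hjQ, hsQ, hochQ, hichQ, hrtQ, hipQ⟩ := ihQ f g h.2.2.2
      have hguard : s.subst (nm f) = t.subst (nm f) ↔ s = t := by
        constructor
        · intro hst
          have := congrArg (Term.subst (nm g)) hst
          rwa [h.1, h.2.1] at this
        · intro hst; rw [hst]
      by_cases hst : s = t
      · have hst' : s.subst (nm f) = t.subst (nm f) := hguard.mpr hst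
        refine ⟨?_, ?_, ?_, ?_, ?_, ?_, ?_⟩ <;>
          simp only [Proc.subst, oCnt, jSet, sExp, oCh, iCh, ip, if_pos hst, if_pos hst']
        · exact hoP
        · exact hjP
        · exact hsP
        · exact hochP
        · exact hichP
        · intro c hc; exact hrtP c hc
        · exact hipP
      · have hst' : ¬ s.subst (nm f) = t.subst (nm f) := fun hk => hst (hguard.mp hk)
        refine ⟨?_, ?_, ?_, ?_, ?_, ?_, ?_⟩ <;>
          simp only [Proc.subst, oCnt, jSet, sExp, oCh, iCh, ip, if_neg hst, if_neg hst']
        · exact hoQ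
        · exact hjQ
        · exact hsQ
        · exact hochQ
        · exact hichQ
        · intro c hc; exact hrtQ c hc
        · exact hipQ
  | repl P ihP =>
      intro f g h
      simp only [Proc.subst, Proc.repl.injEq] at h
      obtain ⟨hoP, hjP, hsP, hochP, hichP, hrtP, hipP⟩ := ihP f g h
      refine ⟨?_, hjP, hsP, hochP, hichP, hrtP, ?_⟩
      · show (if oCnt _ = 0 then (0:ℕ∞) else ⊤) = _
        rw [hoP]; rfl
      · show (ip _ ∨ ∃ c, c ∈ oCh _ ∧ c ∈ iCh _) ↔ _
        rw [hochP, hichP]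
        refine or_congr hipP ?_
        constructor
        · rintro ⟨c, ⟨c₁, hc₁, rfl⟩, c₂, hc₂, hc₂eq⟩
          have hcc : c₁ = c₂ := by
            rw [← hrtP c₁ (Or.inl hc₁), ← hc₂eq, hrtP c₂ (Or.inr hc₂)]
          exact ⟨c₁, hc₁, hcc ▸ hc₂⟩
        · rintro ⟨c, hc₁, hc₂⟩
          exact ⟨omap f c, ⟨c, hc₁, rfl⟩, ⟨c, hc₂, rfl⟩⟩

lemma fnames_subset_anames : ∀ P : Proc, P.fnames ⊆ P.anames := by
  intro P
  induction P with
  | nil => simp [Proc.fnames, Proc.anames]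
  | succ => simp [Proc.fnames, Proc.anames]
  | out ch ts Pc ih =>
      intro x hx
      simp only [Proc.fnames, Finset.mem_union] at hx
      simp only [Proc.anames, Finset.mem_union]
      rcases hx with (hx | hx) | hx
      · exact Or.inl (Or.inl hx)
      · exact Or.inl (Or.inr hx)
      · exact Or.inr (ih hx)
  | inp J Pc ih =>
      intro x hx
      simp only [Proc.fnames, Finset.mem_union, Finset.mem_sdiff] at hx
      simp only [Proc.anames, Finset.mem_union]
      rcases hx with hx | hx
      · exact Or.inl (Or.inl hx)
      · exact Or.inr (ih hx.1)
  | res a Pc ih =>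
      intro x hx
      simp only [Proc.fnames, Finset.mem_erase] at hx
      simp only [Proc.anames, Finset.mem_insert]
      exact Or.inr (ih hx.2)
  | par P Q ihP ihQ =>
      intro x hx
      simp only [Proc.fnames, Finset.mem_union] at hx
      simp only [Proc.anames, Finset.mem_union]
      exact hx.imp (fun h => ihP h) (fun h => ihQ h)
  | ite s t P Q ihP ihQ =>
      intro x hx
      simp only [Proc.fnames, Finset.mem_union] at hx
      simp only [Proc.anames, Finset.mem_union]
      rcases hx with ((hx | hx) | hx) | hx
      · exact Or.inl (Or.inl (Or.inl hx))
      · exact Or.inl (Or.inl (Or.inr hx))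
      · exact Or.inl (Or.inr (ihP hx))
      · exact Or.inr (ihQ hx)
  | repl P ihP => exact ihP

/-- Transfer facts for alpha-renaming `a` to a fresh `b`. -/
lemma alphaTransfer {a b : Name} (hab : a ≠ b) (S : Set (Option Term))
    (hbS : ∀ c ∈ S, b ∉ optNames c) :
    (∀ c ∈ S, (b ∈ optNames (omap (rr a b) c) ↔ a ∈ optNames c)) ∧
    (∀ c ∈ S, a ∉ optNames c → omap (rr a b) c = c) ∧
    ({y ∈ omap (rr a b) '' S | b ∉ optNames y} = {c ∈ S | a ∉ optNames c}) := by
  have htrans : ∀ c ∈ S, (b ∈ optNames (omap (rr a b) c) ↔ a ∈ optNames c) := by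
    intro c hc
    rw [optNames_omap]
    constructor
    · intro h
      obtain ⟨y, hy, hfy⟩ := Finset.mem_image.mp h
      by_cases hya : y = a
      · exact hya ▸ hy
      · exfalso
        rw [rr, if_neg hya] at hfy
        exact hbS c hc (hfy ▸ hy)
    · intro h
      exact Finset.mem_image.mpr ⟨a, h, by simp [rr]⟩
  have hagree : ∀ c ∈ S, a ∉ optNames c → omap (rr a b) c = c := by
    intro c hc ha
    cases c with
    | none => rfl
    | some t =>
        simp only [omap, Option.map_some, Option.some.injEq]
        exact term_subst_fresh t fun y hy => by
          rw [rr, if_neg (fun hk : y = a => ha (hk ▸ hy))]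
  refine ⟨htrans, hagree, ?_⟩
  ext y
  simp only [Set.mem_setOf_eq, Set.mem_image]
  constructor
  · rintro ⟨⟨c, hc, rfl⟩, hby⟩
    have ha : a ∉ optNames c := fun h => hby ((htrans c hc).mpr h)
    rw [hagree c hc ha]
    exact ⟨hc, ha⟩
  · rintro ⟨hc, ha⟩
    exact ⟨⟨y, hc, hagree y hc ha⟩, hbS y hc⟩

lemma proc_subst_id (P : Proc) : P.subst (fun x => Term.name x) = P := by
  have hterm : ∀ t : Term, t.subst (fun x => Term.name x) = t := fun t => term_subst_id t
  have hpat : ∀ p : Pat, p.subst (fun x => Term.name x) = p := by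
    intro p
    induction p with
    | bind y => rfl
    | nmatch a => rfl
    | comp p q ihp ihq => simp [Pat.subst, ihp, ihq]
  have hshadow : ∀ bs, shadow (fun x => Term.name x) bs = (fun x => Term.name x) := by
    intro bs; funext x; simp [shadow]
  induction P with
  | nil => rfl
  | succ => rfl
  | out ch ts Pc ih =>
      simp only [Proc.subst, Proc.out.injEq]
      refine ⟨?_, ?_, ih⟩
      · cases ch <;> simp [hterm]
      · exact list_map_self _ _ fun t _ => hterm t
  | inp J Pc ih =>
      simp only [Proc.subst, hshadow, Proc.inp.injEq]
      refine ⟨?_, ih⟩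
      refine list_map_self _ _ fun j _ => ?_
      have h1 : j.1.map (Term.subst fun x => Term.name x) = j.1 := by
        cases hj : j.1 <;> simp [hterm]
      have h2 : j.2.map (Pat.subst fun x => Term.name x) = j.2 :=
        list_map_self _ _ fun p _ => hpat p
      calc (j.1.map (Term.subst fun x => Term.name x),
            j.2.map (Pat.subst fun x => Term.name x)) = (j.1, j.2) := by rw [h1, h2]
        _ = j := rfl
  | res a Pc ih => simp only [Proc.subst, hshadow, Proc.res.injEq]; exact ⟨trivial, ih⟩
  | par P Q ihP ihQ => simp only [Proc.subst, Proc.par.injEq]; exact ⟨ihP, ihQ⟩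
  | ite s t P Q ihP ihQ =>
      simp only [Proc.subst, Proc.ite.injEq]
      exact ⟨hterm s, hterm t, ihP, ihQ⟩
  | repl P ihP => simp only [Proc.subst, Proc.repl.injEq]; exact ihP

lemma ren1_self (a : Name) : ren1 a a = (fun x => Term.name x) := by
  funext x
  by_cases h : x = a
  · subst h; simp [ren1]
  · simp [ren1, h]

/-- Invariance of all exposure measures under structural congruence. -/
lemma congr_meas {P Q : Proc} (h : Congr P Q) :
    oCnt P = oCnt Q ∧ jSet P = jSet Q ∧ (sExp P ↔ sExp Q) ∧
    oCh P = oCh Q ∧ iCh P = iCh Q ∧ (ip P ↔ ip Q) := by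
  induction h with
  | refl P => exact ⟨rfl, rfl, Iff.rfl, rfl, rfl, Iff.rfl⟩
  | symm _ ih => exact ⟨ih.1.symm, ih.2.1.symm, ih.2.2.1.symm, ih.2.2.2.1.symm,
      ih.2.2.2.2.1.symm, ih.2.2.2.2.2.symm⟩
  | trans _ _ ih1 ih2 =>
      exact ⟨ih1.1.trans ih2.1, ih1.2.1.trans ih2.2.1, ih1.2.2.1.trans ih2.2.2.1,
        ih1.2.2.2.1.trans ih2.2.2.2.1, ih1.2.2.2.2.1.trans ih2.2.2.2.2.1,
        ih1.2.2.2.2.2.trans ih2.2.2.2.2.2⟩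
  | par_nil P =>
      refine ⟨by simp [oCnt], by simp [jSet], by simp [sExp], by simp [oCh],
        by simp [iCh], ?_⟩
      simp [ip, oCh, iCh]
  | par_comm P Q =>
      refine ⟨add_comm _ _, Set.union_comm _ _, or_comm, Set.union_comm _ _,
        Set.union_comm _ _, ?_⟩
      simp only [ip]
      constructor
      · rintro (h | h | ⟨c, hc | hc⟩)
        · exact Or.inr (Or.inl h)
        · exact Or.inl h
        · exact Or.inr (Or.inr ⟨c, Or.inr hc⟩)
        · exact Or.inr (Or.inr ⟨c, Or.inl hc⟩)
      · rintro (h | h | ⟨c, hc | hc⟩)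
        · exact Or.inr (Or.inl h)
        · exact Or.inl h
        · exact Or.inr (Or.inr ⟨c, Or.inr hc⟩)
        · exact Or.inr (Or.inr ⟨c, Or.inl hc⟩)
  | par_assoc P Q R =>
      refine ⟨(add_assoc _ _ _).symm, (Set.union_assoc _ _ _).symm,
        (by simp only [sExp]; exact or_assoc.symm),
        (Set.union_assoc _ _ _).symm, (Set.union_assoc _ _ _).symm, ?_⟩
      simp only [ip, oCh, iCh, Set.mem_union, and_or_left, or_and_right, exists_or]
      aesop
  | ite_eq s P Q =>
      exact ⟨by simp [oCnt], by simp [jSet], by simp [sExp], by simp [oCh],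
        by simp [iCh], by simp [ip]⟩
  | @ite_ne s t h P Q =>
      exact ⟨by simp [oCnt, if_neg h], by simp [jSet, if_neg h], by simp [sExp, if_neg h],
        by simp [oCh, if_neg h], by simp [iCh, if_neg h], by simp [ip, if_neg h]⟩
  | res_nil a =>
      refine ⟨by simp [oCnt], by simp [jSet], by simp [sExp], ?_, ?_, ?_⟩
      · ext c; simp [oCh]
      · ext c; simp [iCh]
      · simp [ip, oCh, iCh]
  | res_swap a b P =>
      have key : ∀ (u v : Name),
          ((ip P ∨ ∃ c, c ∈ oCh P ∧ c ∈ iCh P ∧ u ∈ optNames c) ∨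
            ∃ c, ((c ∈ oCh P ∧ u ∉ optNames c) ∧ (c ∈ iCh P ∧ u ∉ optNames c) ∧
              v ∈ optNames c)) ↔
          (ip P ∨ ∃ c, c ∈ oCh P ∧ c ∈ iCh P ∧ (u ∈ optNames c ∨ v ∈ optNames c)) := by
        intro u v
        constructor
        · rintro ((h | ⟨c, h1, h2, h3⟩) | ⟨c, ⟨h1, _⟩, ⟨h2, _⟩, h3⟩)
          · exact Or.inl h
          · exact Or.inr ⟨c, h1, h2, Or.inl h3⟩
          · exact Or.inr ⟨c, h1, h2, Or.inr h3⟩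
        · rintro (h | ⟨c, h1, h2, h3 | h3⟩)
          · exact Or.inl (Or.inl h)
          · exact Or.inl (Or.inr ⟨c, h1, h2, h3⟩)
          · by_cases hu : u ∈ optNames c
            · exact Or.inl (Or.inr ⟨c, h1, h2, hu⟩)
            · exact Or.inr ⟨c, ⟨h1, hu⟩, ⟨h2, hu⟩, h3⟩
      refine ⟨by simp [oCnt], by simp [jSet], by simp [sExp], ?_, ?_, ?_⟩
      · ext c; simp only [oCh, Set.mem_setOf_eq]; tauto
      · ext c; simp only [iCh, Set.mem_setOf_eq]; tauto
      · simp only [ip, oCh, iCh, Set.mem_setOf_eq]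
        exact (key b a).trans ((or_congr Iff.rfl (exists_congr fun c =>
          and_congr Iff.rfl (and_congr Iff.rfl or_comm))).trans (key a b).symm)
  | @res_par P a Q h =>
      have hoP : ∀ c ∈ oCh P, a ∉ optNames c :=
        fun c hc hac => h ((och_names P).1 c hc hac)
      have hiP : ∀ c ∈ iCh P, a ∉ optNames c :=
        fun c hc hac => h ((och_names P).2 c hc hac)
      refine ⟨by simp [oCnt], by simp [jSet], by simp [sExp], ?_, ?_, ?_⟩
      · ext c
        simp only [oCh, Set.mem_union, Set.mem_setOf_eq]
        constructor
        · rintro (hc | ⟨hc, hac⟩)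
          · exact ⟨Or.inl hc, hoP c hc⟩
          · exact ⟨Or.inr hc, hac⟩
        · rintro ⟨hc | hc, hac⟩
          · exact Or.inl hc
          · exact Or.inr ⟨hc, hac⟩
      · ext c
        simp only [iCh, Set.mem_union, Set.mem_setOf_eq]
        constructor
        · rintro (hc | ⟨hc, hac⟩)
          · exact ⟨Or.inl hc, hiP c hc⟩
          · exact ⟨Or.inr hc, hac⟩
        · rintro ⟨hc | hc, hac⟩
          · exact Or.inl hc
          · exact Or.inr ⟨hc, hac⟩
      · simp only [ip, oCh, iCh, Set.mem_union, Set.mem_setOf_eq]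
        constructor
        · rintro (h1 | (h1 | ⟨c, h1, h2, h3⟩) | ⟨c, ⟨h1, h2, _⟩ | ⟨⟨h1, _⟩, h2⟩⟩)
          · exact Or.inl (Or.inl h1)
          · exact Or.inl (Or.inr (Or.inl h1))
          · exact Or.inr ⟨c, ⟨Or.inr h1, Or.inr h2, h3⟩⟩
          · exact Or.inl (Or.inr (Or.inr ⟨c, Or.inl ⟨h1, h2⟩⟩))
          · exact Or.inl (Or.inr (Or.inr ⟨c, Or.inr ⟨h1, h2⟩⟩))
        · rintro ((h1 | h1 | ⟨c, ⟨h1, h2⟩ | ⟨h1, h2⟩⟩) | ⟨c, h1 | h1, h2 | h2, h3⟩)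
          · exact Or.inl h1
          · exact Or.inr (Or.inl (Or.inl h1))
          · exact Or.inr (Or.inr ⟨c, Or.inl ⟨h1, h2, hoP c h1⟩⟩)
          · exact Or.inr (Or.inr ⟨c, Or.inr ⟨⟨h1, hiP c h2⟩, h2⟩⟩)
          · exact absurd h3 (hoP c h1)
          · exact absurd h3 (hoP c h1)
          · exact absurd h3 (hiP c h2)
          · exact Or.inr (Or.inl (Or.inr ⟨c, h1, h2, h3⟩))
  | repl_unfold P =>
      refine ⟨?_, by simp [jSet], by simp [sExp], by simp [oCh], by simp [iCh], ?_⟩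
      · show (if oCnt P = 0 then (0:ℕ∞) else ⊤) = oCnt P + if oCnt P = 0 then (0:ℕ∞) else ⊤
        by_cases h0 : oCnt P = 0
        · simp [h0]
        · simp [h0]
      · simp only [ip, oCh, iCh]
        tauto
  | @alpha_res P b a h =>
      by_cases hab : a = b
      · subst hab
        rw [ren1_self, proc_subst_id]
        exact ⟨by simp [oCnt], by simp [jSet], by simp [sExp], rfl, rfl, Iff.rfl⟩
      · have hd := subst_double P h a
        rw [ren1_eq_nm, ren1_eq_nm] at hd
        obtain ⟨ho, hj, hs, hoch, hich, hrt, hip⟩ := subinv P (rr a b) (rr b a) hd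
        have hbo : ∀ c ∈ oCh P, b ∉ optNames c :=
          fun c hc hbc => h (fnames_subset_anames P ((och_names P).1 c hc hbc))
        have hbi : ∀ c ∈ iCh P, b ∉ optNames c :=
          fun c hc hbc => h (fnames_subset_anames P ((och_names P).2 c hc hbc))
        obtain ⟨htO, haO, hsetO⟩ := alphaTransfer hab (oCh P) hbo
        obtain ⟨htI, haI, hsetI⟩ := alphaTransfer hab (iCh P) hbi
        rw [ren1_eq_nm]
        refine ⟨?_, ?_, ?_, ?_, ?_, ?_⟩
        · show oCnt P = oCnt (Proc.res b _)
          simp only [oCnt]; exact ho.symm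
        · show jSet P = jSet (Proc.res b _)
          simp only [jSet]; exact hj.symm
        · show sExp P ↔ sExp (Proc.res b _)
          simp only [sExp]; exact hs.symm
        · show {c ∈ oCh P | a ∉ optNames c} = {c ∈ oCh _ | b ∉ optNames c}
          rw [hoch]; exact hsetO.symm
        · show {c ∈ iCh P | a ∉ optNames c} = {c ∈ iCh _ | b ∉ optNames c}
          rw [hich]; exact hsetI.symm
        · show (ip P ∨ ∃ c, c ∈ oCh P ∧ c ∈ iCh P ∧ a ∈ optNames c) ↔
              (ip _ ∨ ∃ c, c ∈ oCh _ ∧ c ∈ iCh _ ∧ b ∈ optNames c)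
          rw [hoch, hich]
          refine or_congr hip.symm ?_
          constructor
          · rintro ⟨c, h1, h2, h3⟩
            exact ⟨omap (rr a b) c, ⟨c, h1, rfl⟩, ⟨c, h2, rfl⟩, (htO c h1).mpr h3⟩
          · rintro ⟨c, ⟨c₁, hc₁, rfl⟩, ⟨c₂, hc₂, hc₂eq⟩, h3⟩
            have hcc : c₁ = c₂ := by
              rw [← hrt c₁ (Or.inl hc₁), ← hc₂eq, hrt c₂ (Or.inr hc₂)]
            exact ⟨c₁, hc₁, hcc ▸ hc₂, (htO c₁ hc₁).mp h3⟩
  | @alpha_inp J x P b hx hb =>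
      refine ⟨by simp [oCnt], ?_, by simp [sExp], by simp [oCh], ?_, by simp [ip]⟩
      · show ({J.length} : Set ℕ) = {(renameBindJoin x b J).length}
        simp [renameBindJoin]
      · show {c | ∃ j ∈ J, j.1 = c} = {c | ∃ j ∈ renameBindJoin x b J, j.1 = c}
        ext c
        simp only [Set.mem_setOf_eq, renameBindJoin, List.mem_map]
        constructor
        · rintro ⟨j, hj, rfl⟩
          exact ⟨(j.1, j.2.map (renameBindPat x b)), ⟨j, hj, rfl⟩, rfl⟩
        · rintro ⟨j', ⟨j, hj, rfl⟩, rfl⟩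
          exact ⟨j, hj, rfl⟩
  | ctx_out _ ih =>
      exact ⟨rfl, rfl, Iff.rfl, rfl, rfl, Iff.rfl⟩
  | ctx_inp _ ih =>
      exact ⟨rfl, rfl, Iff.rfl, rfl, rfl, Iff.rfl⟩
  | ctx_res _ ih =>
      obtain ⟨ho, hj, hs, hoch, hich, hip⟩ := ih
      refine ⟨?_, ?_, ?_, ?_, ?_, ?_⟩
      · simp only [oCnt]; exact ho
      · simp only [jSet]; exact hj
      · simp only [sExp]; exact hs
      · show {c ∈ oCh _ | _ ∉ optNames c} = {c ∈ oCh _ | _ ∉ optNames c}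
        rw [hoch]
      · show {c ∈ iCh _ | _ ∉ optNames c} = {c ∈ iCh _ | _ ∉ optNames c}
        rw [hich]
      · simp only [ip]
        rw [hoch, hich, hip.eq]
  | ctx_par _ _ ihP ihQ =>
      obtain ⟨hoP, hjP, hsP, hochP, hichP, hipP⟩ := ihP
      obtain ⟨hoQ, hjQ, hsQ, hochQ, hichQ, hipQ⟩ := ihQ
      refine ⟨?_, ?_, ?_, ?_, ?_, ?_⟩
      · simp only [oCnt]; rw [hoP, hoQ]
      · simp only [jSet]; rw [hjP, hjQ]
      · simp only [sExp]; exact or_congr hsP hsQ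
      · simp only [oCh]; rw [hochP, hochQ]
      · simp only [iCh]; rw [hichP, hichQ]
      · simp only [ip]; rw [hipP.eq, hipQ.eq, hochP, hochQ, hichP, hichQ]
  | @ctx_ite P P' Q Q' s t _ _ ihP ihQ =>
      obtain ⟨hoP, hjP, hsP, hochP, hichP, hipP⟩ := ihP
      obtain ⟨hoQ, hjQ, hsQ, hochQ, hichQ, hipQ⟩ := ihQ
      by_cases hst : s = t
      · exact ⟨by simp only [oCnt, if_pos hst]; exact hoP,
          by simp only [jSet, if_pos hst]; exact hjP,
          by simp only [sExp, if_pos hst]; exact hsP,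
          by simp only [oCh, if_pos hst]; exact hochP,
          by simp only [iCh, if_pos hst]; exact hichP,
          by simp only [ip, if_pos hst]; exact hipP⟩
      · exact ⟨by simp only [oCnt, if_neg hst]; exact hoQ,
          by simp only [jSet, if_neg hst]; exact hjQ,
          by simp only [sExp, if_neg hst]; exact hsQ,
          by simp only [oCh, if_neg hst]; exact hochQ,
          by simp only [iCh, if_neg hst]; exact hichQ,
          by simp only [ip, if_neg hst]; exact hipQ⟩
  | ctx_repl _ ih =>
      obtain ⟨ho, hj, hs, hoch, hich, hip⟩ := ih
      refine ⟨?_, ?_, ?_, ?_, ?_, ?_⟩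
      · simp only [oCnt]; rw [ho]
      · simp only [jSet]; exact hj
      · simp only [sExp]; exact hs
      · simp only [oCh]; exact hoch
      · simp only [iCh]; exact hich
      · simp only [ip]; rw [hip.eq, hoch, hich]

lemma joinMatch_len : ∀ (os : List (Option Term × List Term))
    (js : List (Option Term × List Pat)) (l : List (Name × Term)),
    joinMatch os js = some l → os.length = js.length := by
  intro os
  induction os with
  | nil =>
      intro js l h
      cases js with
      | nil => rfl
      | cons j js => simp [joinMatch] at h
  | cons o os ih =>
      intro js l h
      cases js with
      | nil => obtain ⟨c, ts⟩ := o; simp [joinMatch] at h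
      | cons j js =>
          obtain ⟨c, ts⟩ := o
          obtain ⟨c', ps⟩ := j
          simp only [joinMatch] at h
          split at h
          · simp only [Option.bind_eq_bind, Option.bind_eq_some_iff] at h
            obtain ⟨l1, h1, l2, h2, h3⟩ := h
            simp only [List.length_cons, ih js l2 h2]
          · exact absurd h (by simp)

lemma joinMatch_head_eq {c c' : Option Term} {ts ps os js l}
    (h : joinMatch ((c, ts) :: os) ((c', ps) :: js) = some l) : c = c' := by
  simp only [joinMatch] at h
  split at h
  · assumption
  · exact absurd h (by simp)

lemma oCnt_parList_outs (outs : List (Option Term × List Term × Proc)) :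
    oCnt (parList (outs.map fun o => Proc.out o.1 o.2.1 o.2.2)) = outs.length := by
  induction outs with
  | nil => simp [parList, oCnt]
  | cons o os ih =>
      simp only [List.map_cons, parList, List.foldr_cons, List.length_cons]
      show (1 : ℕ∞) + oCnt (parList (os.map fun o => Proc.out o.1 o.2.1 o.2.2)) = _
      rw [show oCnt (parList (os.map fun o => Proc.out o.1 o.2.1 o.2.2)) =
        (os.length : ℕ∞) from ih]
      rw [Nat.cast_succ, add_comm]

/-- Reduction invariants: a reduction implies an exposed redex and an exposed
matching channel pair. -/
lemma red_inv {P Q : Proc} (h : Red P Q) : canFire P ∧ pairFire P := by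
  induction h with
  | interact outs J Qc l hne hm =>
      have hlen : outs.length = J.length := by
        have := joinMatch_len _ _ _ hm
        simpa using this
      constructor
      · refine ⟨J.length, ?_, ?_, ?_⟩
        · show J.length ∈ jSet _ ∪ jSet (Proc.inp J Qc)
          exact Or.inr rfl
        · rw [← hlen]
          cases outs with
          | nil => exact absurd rfl hne
          | cons o os => simp
        · show (J.length : ℕ∞) ≤ oCnt _ + oCnt (Proc.inp J Qc)
          rw [← hlen, oCnt_parList_outs]
          simp [oCnt]
      · cases outs with
        | nil => exact absurd rfl hne
        | cons o os =>
            cases J with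
            | nil =>
                exfalso
                obtain ⟨c, ts, cont⟩ := o
                simp [joinMatch] at hm
            | cons j js =>
                obtain ⟨c, ts, cont⟩ := o
                obtain ⟨c', ps⟩ := j
                have hcc : c = c' := joinMatch_head_eq (by exact hm)
                refine Or.inr ⟨c, Or.inl ?_, Or.inr ?_⟩
                · show c ∈ oCh (Proc.par (Proc.out c ts cont) _)
                  exact Or.inl rfl
                · exact ⟨(c', ps), by simp, hcc.symm⟩
  | ctx_par _ ih =>
      obtain ⟨⟨i, hi, h1, h2⟩, hp⟩ := ih
      constructor
      · exact ⟨i, Or.inl hi, h1, le_trans h2 (by simp [oCnt])⟩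
      · rcases hp with hp | ⟨c, h1, h2⟩
        · exact Or.inl (Or.inl hp)
        · exact Or.inr ⟨c, Or.inl h1, Or.inl h2⟩
  | @ctx_res Pi Pi' a _ ih =>
      obtain ⟨⟨i, hi, h1, h2⟩, hp⟩ := ih
      constructor
      · exact ⟨i, hi, h1, h2⟩
      · rcases hp with hp | ⟨c, h1, h2⟩
        · exact Or.inl (Or.inl hp)
        · by_cases hac : a ∈ optNames c
          · exact Or.inl (Or.inr ⟨c, h1, h2, hac⟩)
          · exact Or.inr ⟨c, ⟨h1, hac⟩, ⟨h2, hac⟩⟩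
  | struct hc _ _ ih =>
      obtain ⟨ho, hj, _, hoch, hich, hip⟩ := congr_meas hc
      obtain ⟨⟨i, hi, h1, h2⟩, hp⟩ := ih
      constructor
      · exact ⟨i, hj ▸ hi, h1, ho ▸ h2⟩
      · rcases hp with hp | ⟨c, h1', h2'⟩
        · exact Or.inl (hip.mpr hp)
        · exact Or.inr ⟨c, hoch ▸ h1', hich ▸ h2'⟩

lemma stuck_reds {P Q : Proc} (hs : ¬ Reduces P) (h : Reds P Q) : Q = P := by
  induction h with
  | refl => rfl
  | tail hr hstep ih => exact absurd ⟨_, ih ▸ hstep⟩ hs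

lemma stuck_not_diverges {P : Proc} (hs : ¬ Reduces P) : ¬ Diverges P := by
  rintro ⟨f, h0, hstep⟩
  exact hs ⟨f 1, h0 ▸ hstep 0⟩

lemma sExp_of_congr_succ {P R : Proc} (h : Congr P (.par R .succ)) : sExp P := by
  have := (congr_meas h).2.2.1
  rw [this]
  exact Or.inr trivial

/-! ### Gathering redexes -/

def resList (ns : List Name) (P : Proc) : Proc := ns.foldr .res P

lemma resList_append (ns ms : List Name) (P : Proc) :
    resList (ns ++ ms) P = resList ns (resList ms P) := by
  simp [resList, List.foldr_append]

lemma congr_resList {ns : List Name} {P Q : Proc} (h : Congr P Q) :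
    Congr (resList ns P) (resList ns Q) := by
  induction ns with
  | nil => exact h
  | cons n ns ih => exact Congr.ctx_res ih

lemma red_resList {ns : List Name} {P Q : Proc} (h : Red P Q) :
    Red (resList ns P) (resList ns Q) := by
  induction ns with
  | nil => exact h
  | cons n ns ih => exact Red.ctx_res ih

lemma oCnt_resList (ns : List Name) (P : Proc) : oCnt (resList ns P) = oCnt P := by
  induction ns with
  | nil => rfl
  | cons n ns ih => simpa [resList, oCnt] using ih

lemma congr_par_resList {ns : List Name} {X Y : Proc}
    (h : ∀ n ∈ ns, n ∉ Y.fnames) :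
    Congr (.par (resList ns X) Y) (resList ns (.par X Y)) := by
  induction ns with
  | nil => exact Congr.refl _
  | cons n ns ih =>
      have h1 : Congr (Proc.par (resList (n :: ns) X) Y)
          (Proc.par Y (Proc.res n (resList ns X))) := Congr.par_comm _ _
      have h2 : Congr (Proc.par Y (Proc.res n (resList ns X)))
          (Proc.res n (Proc.par Y (resList ns X))) := Congr.res_par (h n (by simp))
      have h3 : Congr (Proc.res n (Proc.par Y (resList ns X)))
          (Proc.res n (Proc.par (resList ns X) Y)) := Congr.ctx_res (Congr.par_comm _ _)
      have h4 : Congr (Proc.res n (Proc.par (resList ns X) Y))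
          (Proc.res n (resList ns (Proc.par X Y))) :=
        Congr.ctx_res (ih fun m hm => h m (by simp [hm]))
      exact ((h1.trans h2).trans h3).trans h4

/-- A fresh name avoiding a finite set. -/
def freshN (s : Finset Name) : Name := (s.sup id) + 1

lemma freshN_not_mem (s : Finset Name) : freshN s ∉ s := by
  intro h
  have h2 : freshN s ≤ s.sup id := Finset.le_sup (f := id) h
  exact Nat.not_succ_le_self _ h2

def depth : Proc → ℕ
  | .nil => 0
  | .out _ _ P => depth P + 1
  | .inp _ P => depth P + 1
  | .res _ P => depth P + 1
  | .par P Q => max (depth P) (depth Q) + 1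
  | .ite _ _ P Q => max (depth P) (depth Q) + 1
  | .repl P => depth P + 1
  | .succ => 0

lemma depth_subst : ∀ (P : Proc) (σ : Sub), depth (P.subst σ) = depth P := by
  intro P
  induction P with
  | nil => intro σ; rfl
  | succ => intro σ; rfl
  | out ch ts Pc ih => intro σ; simp [Proc.subst, depth, ih]
  | inp J Pc ih => intro σ; simp [Proc.subst, depth, ih]
  | res a Pc ih => intro σ; simp [Proc.subst, depth, ih]
  | par P Q ihP ihQ => intro σ; simp [Proc.subst, depth, ihP, ihQ]
  | ite s t P Q ihP ihQ => intro σ; simp [Proc.subst, depth, ihP, ihQ]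
  | repl P ih => intro σ; simp [Proc.subst, depth, ih]

/-- Well-formedness is preserved by name-renamings. -/
lemma wf_subst {F : Features} :
    ∀ (P : Proc) (f : Name → Name), P.WF F → (P.subst (nm f)).WF F := by
  intro P
  induction P with
  | nil => intro f h; exact h
  | succ => intro f h; exact h
  | out ch ts Pc ih =>
      rintro f ⟨hch, har, hdata, hasync, hwf⟩
      refine ⟨?_, ?_, ?_, ?_, ih f hwf⟩
      · cases ch with
        | none => exact hch
        | some t =>
            obtain ⟨hm, hp⟩ := hch
            refine ⟨hm, ?_⟩
            rcases hp with hp | hp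
            · exact Or.inl hp
            · cases t with
              | name a => exact Or.inr trivial
              | comp s t => exact absurd hp (by simp [Term.isName])
      · simpa using har
      · intro t' ht'
        simp only [List.mem_map] at ht'
        obtain ⟨t, ht, rfl⟩ := ht'
        rcases hdata t ht with hp | hp
        · exact Or.inl hp
        · cases t with
          | name a => exact Or.inr trivial
          | comp s t => exact absurd hp (by simp [Term.isName])
      · intro hA
        rw [hasync hA]
        rfl
  | inp J Pc ih =>
      rintro f ⟨hlen, hjs, hnd, hwf⟩
      refine ⟨?_, ?_, ?_, ?_⟩
      · simpa using hlen
      · intro j' hj'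
        simp only [List.mem_map] at hj'
        obtain ⟨j, hj, rfl⟩ := hj'
        obtain ⟨hch, har, hps⟩ := hjs j hj
        refine ⟨?_, ?_, ?_⟩
        · show WFchan F (Option.map (Term.subst (nm f)) j.1)
          cases hc : j.1 with
          | none => rw [hc] at hch; exact hch
          | some t =>
              rw [hc] at hch
              simp only [Option.map_some]
              obtain ⟨hm, hp⟩ := hch
              refine ⟨hm, ?_⟩
              rcases hp with hp | hp
              · exact Or.inl hp
              · cases t with
                | name a => exact Or.inr trivial
                | comp s t => exact absurd hp (by simp [Term.isName])
        · show WFarity F (j.2.map (Pat.subst (nm f))).length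
          simpa using har
        · show ∀ p ∈ j.2.map (Pat.subst (nm f)), WFpat F.pm p
          intro p' hp'
          simp only [List.mem_map] at hp'
          obtain ⟨p, hp, rfl⟩ := hp'
          have hwfp := hps p hp
          cases p with
          | bind y =>
              show WFpat F.pm (Pat.bind y)
              exact hwfp
          | nmatch a =>
              show WFpat F.pm ((Term.name (f a)).toMatchPat)
              rw [toMatchPat_name]
              cases hpm : F.pm
              · rw [hpm] at hwfp; exact absurd hwfp (by simp [WFpat])
              · trivial
              · trivial
          | comp p q =>
              cases hpm : F.pm
              · rw [hpm] at hwfp; exact absurd hwfp (by simp [WFpat])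
              · rw [hpm] at hwfp; exact absurd hwfp (by simp [WFpat])
              · trivial
      · rw [joinBinds_map_subst]
        exact hnd
      · show Proc.WF F (Pc.subst (shadow (nm f) (joinBinds J)))
        rw [shadow_nm]
        exact ih _ hwf
  | res a Pc ih =>
      intro f h
      show Proc.WF F (Pc.subst (shadow (nm f) [a]))
      rw [shadow_nm]
      exact ih _ h
  | par P Q ihP ihQ =>
      rintro f ⟨hP, hQ⟩
      exact ⟨ihP f hP, ihQ f hQ⟩
  | ite s t P Q ihP ihQ =>
      rintro f ⟨hs, ht, hP, hQ⟩
      constructor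
      · rcases hs with hp | hp
        · exact Or.inl hp
        · cases s with
          | name a => exact Or.inr trivial
          | comp u v => exact absurd hp (by simp [Term.isName])
      constructor
      · rcases ht with hp | hp
        · exact Or.inl hp
        · cases t with
          | name a => exact Or.inr trivial
          | comp u v => exact absurd hp (by simp [Term.isName])
      · exact ⟨ihP f hP, ihQ f hQ⟩
  | repl P ih =>
      intro f h
      exact ih f h

lemma congr_par_left {P P' Q : Proc} (h : Congr P P') : Congr (.par P Q) (.par P' Q) :=
  Congr.ctx_par h (Congr.refl _)

lemma congr_par_right {P Q Q' : Proc} (h : Congr Q Q') : Congr (.par P Q) (.par P Q') :=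
  Congr.ctx_par (Congr.refl _) h

/-- `(X | o) | Y ≡ (X | Y) | o`. -/
lemma congr_shuffle (X o Y : Proc) : Congr (.par (.par X o) Y) (.par (.par X Y) o) := by
  have h1 : Congr (Proc.par (Proc.par X o) Y) (Proc.par X (Proc.par o Y)) :=
    (Congr.par_assoc X o Y).symm
  have h2 : Congr (Proc.par X (Proc.par o Y)) (Proc.par X (Proc.par Y o)) :=
    congr_par_right (Congr.par_comm _ _)
  have h3 : Congr (Proc.par X (Proc.par Y o)) (Proc.par (Proc.par X Y) o) :=
    Congr.par_assoc X Y o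
  exact (h1.trans h2).trans h3

/-- `(X | Y) | o ≡ X | (o | Y)`. -/
lemma congr_shuffle' (X Y o : Proc) : Congr (.par (.par X Y) o) (.par X (.par o Y)) := by
  have h1 : Congr (Proc.par (Proc.par X Y) o) (Proc.par X (Proc.par Y o)) :=
    (Congr.par_assoc X Y o).symm
  exact h1.trans (congr_par_right (Congr.par_comm _ _))

lemma red_par_right {P Q Q' : Proc} (h : Red Q Q') : Red (.par P Q) (.par P Q') :=
  Red.struct (Congr.par_comm _ _) (Red.ctx_par h) (Congr.par_comm _ _)

/-- If a success is exposed, it can be brought to the top. -/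
lemma sExp_extract : ∀ (d : ℕ) (R : Proc), depth R ≤ d → sExp R →
    ∃ R', Congr R (.par R' .succ) := by
  intro d
  induction d with
  | zero =>
      intro R hd hs
      cases R with
      | succ => exact ⟨.nil, (Congr.par_nil _).symm.trans (Congr.par_comm _ _)⟩
      | nil => exact absurd hs (by simp [sExp])
      | out ch ts P => simp [depth] at hd
      | inp J P => simp [depth] at hd
      | res a P => simp [depth] at hd
      | par P Q => simp [depth] at hd
      | ite s t P Q => simp [depth] at hd
      | repl P => simp [depth] at hd
  | succ d ih =>
      intro R hd hs
      cases R with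
      | succ => exact ⟨.nil, (Congr.par_nil _).symm.trans (Congr.par_comm _ _)⟩
      | nil => exact absurd hs (by simp [sExp])
      | out ch ts P => exact absurd hs (by simp [sExp])
      | inp J P => exact absurd hs (by simp [sExp])
      | res a P =>
          obtain ⟨R', hc⟩ := ih P (by simp [depth] at hd; omega) hs
          refine ⟨.res a R', ?_⟩
          have h1 : Congr (Proc.res a P) (Proc.res a (Proc.par Proc.succ R')) :=
            Congr.ctx_res (hc.trans (Congr.par_comm _ _))
          have h2 : Congr (Proc.par Proc.succ (Proc.res a R'))
              (Proc.res a (Proc.par Proc.succ R')) :=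
            Congr.res_par (by simp [Proc.fnames])
          exact (h1.trans h2.symm).trans (Congr.par_comm _ _)
      | par P Q =>
          have hd' : depth P ≤ d ∧ depth Q ≤ d := by
            simp [depth] at hd; omega
          rcases hs with hs | hs
          · obtain ⟨P', hc⟩ := ih P hd'.1 hs
            exact ⟨.par Q P', ((congr_par_left hc).trans (Congr.par_comm _ _)).trans
              (Congr.par_assoc _ _ _)⟩
          · obtain ⟨Q', hc⟩ := ih Q hd'.2 hs
            exact ⟨.par P Q', (congr_par_right hc).trans (Congr.par_assoc _ _ _)⟩
      | ite s t P Q =>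
          have hd' : depth P ≤ d ∧ depth Q ≤ d := by
            simp [depth] at hd; omega
          by_cases hst : s = t
          · subst hst
            simp only [sExp, if_pos rfl] at hs
            obtain ⟨R', hc⟩ := ih P hd'.1 hs
            exact ⟨R', (Congr.ite_eq s P Q).trans hc⟩
          · simp only [sExp, if_neg hst] at hs
            obtain ⟨R', hc⟩ := ih Q hd'.2 hs
            exact ⟨R', (Congr.ite_ne hst P Q).trans hc⟩
      | repl P =>
          simp only [sExp] at hs
          obtain ⟨P', hc⟩ := ih P (by simp [depth] at hd; omega) hs
          refine ⟨.par (.repl P) P', ?_⟩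
          have h1 : Congr (Proc.repl P) (Proc.par P (Proc.repl P)) := Congr.repl_unfold P
          have h2 : Congr (Proc.par P (Proc.repl P))
              (Proc.par (Proc.par P' Proc.succ) (Proc.repl P)) := congr_par_left hc
          have h3 := congr_shuffle P' Proc.succ (Proc.repl P)
          have h4 : Congr (Proc.par (Proc.par P' (Proc.repl P)) Proc.succ)
              (Proc.par (Proc.par (Proc.repl P) P') Proc.succ) :=
            congr_par_left (Congr.par_comm _ _)
          exact ((h1.trans h2).trans h3).trans h4

/-- The target language features. -/
abbrev Ft : Features := ⟨.A, .M, .D, .NO, .J⟩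

lemma enat_one_le {x : ℕ∞} (h : x ≠ 0) : 1 ≤ x := by
  cases x with
  | top => exact le_top
  | coe n =>
      have hn : n ≠ 0 := by simpa using h
      exact_mod_cast Nat.one_le_iff_ne_zero.mpr hn

lemma enat_le_of_add_one {k : ℕ} {x : ℕ∞} (h : ((k+1 : ℕ) : ℕ∞) ≤ x + 1) :
    (k : ℕ∞) ≤ x := by
  cases x with
  | top => exact le_top
  | coe n =>
      have : ((k+1 : ℕ) : ℕ∞) ≤ ((n+1 : ℕ) : ℕ∞) := by
        rw [Nat.cast_succ (n := n)]
        exact h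
      have := Nat.cast_le.mp this
      exact_mod_cast Nat.succ_le_succ_iff.mp this

/-- Shape of a well-formed target output. -/
lemma target_out_shape {ch ts Pc} (h : (Proc.out ch ts Pc).WF Ft) :
    ch = none ∧ (∃ m, ts = [Term.name m]) ∧ Pc = .nil := by
  obtain ⟨hch, har, hdata, hasync, _⟩ := h
  refine ⟨?_, ?_, hasync rfl⟩
  · cases ch with
    | none => rfl
    | some t => exact absurd hch.1 (by simp)
  · have h1 : ts.length = 1 := har
    obtain ⟨t, rfl⟩ := List.length_eq_one_iff.mp h1
    have := hdata t (by simp)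
    rcases this with hp | hp
    · exact absurd hp (by simp)
    · cases t with
      | name m => exact ⟨m, rfl⟩
      | comp u v => exact absurd hp (by simp [Term.isName])

/-- Shape of a well-formed target join. -/
lemma target_join_shape {J Pc} (h : (Proc.inp J Pc).WF Ft) :
    1 ≤ J.length ∧ ∀ j ∈ J, j.1 = none ∧ ∃ y, j.2 = [Pat.bind y] := by
  obtain ⟨hlen, hjs, _, _⟩ := h
  refine ⟨hlen, fun j hj => ?_⟩
  obtain ⟨hch, har, hps⟩ := hjs j hj
  constructor
  · cases hc : j.1 with
    | none => rfl
    | some t => rw [hc] at hch; exact absurd hch.1 (by simp)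
  · have h1 : j.2.length = 1 := har
    obtain ⟨p, hp⟩ := List.length_eq_one_iff.mp h1
    have hwfp := hps p (by simp [hp])
    cases p with
    | bind y => exact ⟨y, hp⟩
    | nmatch a => exact absurd hwfp (by simp [WFpat])
    | comp p q => exact absurd hwfp (by simp [WFpat])

/-- Extraction of a single output to the top (modulo restrictions). -/
lemma out_extract : ∀ (d : ℕ) (R : Proc) (A : Finset Name), depth R ≤ d →
    R.WF Ft → 1 ≤ oCnt R →
    ∃ (ns : List Name) (R' : Proc) (m : Name),
      Congr R (resList ns (.par R' (.out none [.name m] .nil))) ∧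
      (∀ n ∈ ns, n ∉ A) ∧ R'.WF Ft := by
  intro d
  induction d with
  | zero =>
      intro R A hd hwf hcnt
      cases R with
      | nil => exact absurd hcnt (by simp [oCnt])
      | succ => exact absurd hcnt (by simp [oCnt])
      | out ch ts P => simp [depth] at hd
      | inp J P => simp [depth] at hd
      | res a P => simp [depth] at hd
      | par P Q => simp [depth] at hd
      | ite s t P Q => simp [depth] at hd
      | repl P => simp [depth] at hd
  | succ d ih =>
      intro R A hd hwf hcnt
      cases R with
      | nil => exact absurd hcnt (by simp [oCnt])
      | succ => exact absurd hcnt (by simp [oCnt])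
      | inp J P => exact absurd hcnt (by simp [oCnt])
      | out ch ts P =>
          obtain ⟨hch, ⟨m, hts⟩, hnil⟩ := target_out_shape hwf
          subst hch; subst hts; subst hnil
          exact ⟨[], .nil, m,
            (Congr.par_nil _).symm.trans (Congr.par_comm _ _), by simp, trivial⟩
      | res a P =>
          obtain ⟨hwfP⟩ : P.WF Ft ∧ True := ⟨hwf, trivial⟩
          have hdP : depth P ≤ d := by simp [depth] at hd; omega
          set b := freshN (P.anames ∪ A) with hbdef
          have hbP : b ∉ P.anames := fun h =>
            freshN_not_mem _ (Finset.mem_union_left _ h)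
          have hbA : b ∉ A := fun h =>
            freshN_not_mem _ (Finset.mem_union_right _ h)
          have hca : Congr (Proc.res a P) (Proc.res b (P.subst (ren1 a b))) :=
            Congr.alpha_res hbP
          have hdbl := subst_double P hbP a
          rw [ren1_eq_nm, ren1_eq_nm] at hdbl
          have hmeas := subinv P (rr a b) (rr b a) hdbl
          have hwf' : (P.subst (ren1 a b)).WF Ft := by
            rw [ren1_eq_nm]; exact wf_subst P _ hwfP
          have hcnt' : 1 ≤ oCnt (P.subst (ren1 a b)) := by
            rw [ren1_eq_nm, hmeas.1]
            exact hcnt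
          have hd' : depth (P.subst (ren1 a b)) ≤ d := by
            rw [depth_subst]; exact hdP
          obtain ⟨ns, R', m, hc, hns, hwfR'⟩ := ih (P.subst (ren1 a b)) A hd' hwf' hcnt'
          exact ⟨b :: ns, R', m, hca.trans (Congr.ctx_res hc),
            fun n hn => by
              rcases List.mem_cons.mp hn with h | h
              · exact h ▸ hbA
              · exact hns n h, hwfR'⟩
      | par P Q =>
          obtain ⟨hwfP, hwfQ⟩ := hwf
          have hdP : depth P ≤ d ∧ depth Q ≤ d := by simp [depth] at hd; omega
          by_cases h0 : oCnt P = 0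
          · have hcnt' : 1 ≤ oCnt Q := by
              have : oCnt (Proc.par P Q) = oCnt Q := by simp [oCnt, h0]
              rwa [this] at hcnt
            obtain ⟨ns, Q', m, hc, hns, hwfQ'⟩ :=
              ih Q (A ∪ P.fnames) hdP.2 hwfQ hcnt'
            refine ⟨ns, .par P Q', m, ?_, fun n hn => fun hA =>
              hns n hn (Finset.mem_union_left _ hA), hwfP, hwfQ'⟩
            have h1 : Congr (Proc.par P Q)
                (Proc.par (resList ns (.par Q' (.out none [.name m] .nil))) P) :=
              (congr_par_right hc).trans (Congr.par_comm _ _)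
            have h2 : Congr _ (resList ns (.par (.par Q' (.out none [.name m] .nil)) P)) :=
              congr_par_resList (fun n hn hfn =>
                hns n hn (Finset.mem_union_right _ hfn))
            have h3 := congr_resList (ns := ns)
              ((congr_shuffle Q' (.out none [.name m] .nil) P).trans
                (congr_par_left (Congr.par_comm _ _)))
            exact (h1.trans h2).trans h3
          · have hcnt' : 1 ≤ oCnt P := enat_one_le h0
            obtain ⟨ns, P', m, hc, hns, hwfP'⟩ :=
              ih P (A ∪ Q.fnames) hdP.1 hwfP hcnt'
            refine ⟨ns, .par P' Q, m, ?_, fun n hn => fun hA =>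
              hns n hn (Finset.mem_union_left _ hA), hwfP', hwfQ⟩
            have h1 : Congr (Proc.par P Q)
                (Proc.par (resList ns (.par P' (.out none [.name m] .nil))) Q) :=
              congr_par_left hc
            have h2 : Congr _ (resList ns (.par (.par P' (.out none [.name m] .nil)) Q)) :=
              congr_par_resList (fun n hn hfn =>
                hns n hn (Finset.mem_union_right _ hfn))
            have h3 := congr_resList (ns := ns)
              (congr_shuffle P' (.out none [.name m] .nil) Q)
            exact (h1.trans h2).trans h3
      | ite s t P Q =>
          obtain ⟨_, _, hwfP, hwfQ⟩ := hwf
          have hdP : depth P ≤ d ∧ depth Q ≤ d := by simp [depth] at hd; omega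
          by_cases hst : s = t
          · subst hst
            have hcnt' : 1 ≤ oCnt P := by
              have : oCnt (Proc.ite s s P Q) = oCnt P := by simp [oCnt]
              rwa [this] at hcnt
            obtain ⟨ns, R', m, hc, hns, hwfR'⟩ := ih P A hdP.1 hwfP hcnt'
            exact ⟨ns, R', m, (Congr.ite_eq s P Q).trans hc, hns, hwfR'⟩
          · have hcnt' : 1 ≤ oCnt Q := by
              have : oCnt (Proc.ite s t P Q) = oCnt Q := by simp [oCnt, if_neg hst]
              rwa [this] at hcnt
            obtain ⟨ns, R', m, hc, hns, hwfR'⟩ := ih Q A hdP.2 hwfQ hcnt'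
            exact ⟨ns, R', m, (Congr.ite_ne hst P Q).trans hc, hns, hwfR'⟩
      | repl P =>
          have hwfP : P.WF Ft := hwf
          have hdP : depth P ≤ d := by simp [depth] at hd; omega
          have h0 : oCnt P ≠ 0 := by
            intro h0
            rw [show oCnt (Proc.repl P) = 0 by simp [oCnt, h0]] at hcnt
            exact absurd hcnt (by simp)
          obtain ⟨ns, P', m, hc, hns, hwfP'⟩ :=
            ih P (A ∪ P.fnames) hdP hwfP (enat_one_le h0)
          refine ⟨ns, .par P' (.repl P), m, ?_, fun n hn => fun hA =>
            hns n hn (Finset.mem_union_left _ hA), hwfP', hwfP⟩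
          have h1 : Congr (Proc.repl P) (Proc.par P (Proc.repl P)) := Congr.repl_unfold P
          have h2 : Congr _ (Proc.par (resList ns
              (.par P' (.out none [.name m] .nil))) (Proc.repl P)) := congr_par_left hc
          have h3 : Congr _ (resList ns
              (.par (.par P' (.out none [.name m] .nil)) (Proc.repl P))) :=
            congr_par_resList (fun n hn hfn =>
              hns n hn (Finset.mem_union_right _ (by simpa [Proc.fnames] using hfn)))
          have h4 := congr_resList (ns := ns)
            (congr_shuffle P' (.out none [.name m] .nil) (Proc.repl P))
          exact ((h1.trans h2).trans h3).trans h4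

/-- Extraction of a join of length `i` to the top (modulo restrictions). -/
lemma join_extract : ∀ (d : ℕ) (R : Proc) (A : Finset Name), depth R ≤ d →
    R.WF Ft → ∀ i, i ∈ jSet R →
    ∃ (ns : List Name) (R' : Proc) (J : List (Option Term × List Pat)) (Pc : Proc),
      Congr R (resList ns (.par R' (.inp J Pc))) ∧
      (∀ n ∈ ns, n ∉ A) ∧ R'.WF Ft ∧ J.length = i ∧
      (∀ j ∈ J, j.1 = none ∧ ∃ y, j.2 = [Pat.bind y]) := by
  intro d
  induction d with
  | zero =>
      intro R A hd hwf i hij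
      cases R with
      | nil => exact absurd hij (by simp [jSet])
      | succ => exact absurd hij (by simp [jSet])
      | out ch ts P => simp [depth] at hd
      | inp J P => simp [depth] at hd
      | res a P => simp [depth] at hd
      | par P Q => simp [depth] at hd
      | ite s t P Q => simp [depth] at hd
      | repl P => simp [depth] at hd
  | succ d ih =>
      intro R A hd hwf i hij
      cases R with
      | nil => exact absurd hij (by simp [jSet])
      | succ => exact absurd hij (by simp [jSet])
      | out ch ts P => exact absurd hij (by simp [jSet])
      | inp J P =>
          have hshape := target_join_shape hwf
          have hlen : J.length = i := by
            simpa [jSet] using hij.symm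
          exact ⟨[], .nil, J, P,
            (Congr.par_nil _).symm.trans (Congr.par_comm _ _), by simp, trivial,
            hlen, hshape.2⟩
      | res a P =>
          have hwfP : P.WF Ft := hwf
          have hdP : depth P ≤ d := by simp [depth] at hd; omega
          set b := freshN (P.anames ∪ A) with hbdef
          have hbP : b ∉ P.anames := fun h =>
            freshN_not_mem _ (Finset.mem_union_left _ h)
          have hbA : b ∉ A := fun h =>
            freshN_not_mem _ (Finset.mem_union_right _ h)
          have hca : Congr (Proc.res a P) (Proc.res b (P.subst (ren1 a b))) :=
            Congr.alpha_res hbP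
          have hdbl := subst_double P hbP a
          rw [ren1_eq_nm, ren1_eq_nm] at hdbl
          have hmeas := subinv P (rr a b) (rr b a) hdbl
          have hwf' : (P.subst (ren1 a b)).WF Ft := by
            rw [ren1_eq_nm]; exact wf_subst P _ hwfP
          have hij' : i ∈ jSet (P.subst (ren1 a b)) := by
            rw [ren1_eq_nm, hmeas.2.1]
            exact hij
          have hd' : depth (P.subst (ren1 a b)) ≤ d := by
            rw [depth_subst]; exact hdP
          obtain ⟨ns, R', J, Pc, hc, hns, hwfR', hJ, hsh⟩ :=
            ih (P.subst (ren1 a b)) A hd' hwf' i hij'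
          exact ⟨b :: ns, R', J, Pc, hca.trans (Congr.ctx_res hc),
            fun n hn => by
              rcases List.mem_cons.mp hn with h | h
              · exact h ▸ hbA
              · exact hns n h, hwfR', hJ, hsh⟩
      | par P Q =>
          obtain ⟨hwfP, hwfQ⟩ := hwf
          have hdP : depth P ≤ d ∧ depth Q ≤ d := by simp [depth] at hd; omega
          rcases hij with hij | hij
          · obtain ⟨ns, P', J, Pc, hc, hns, hwfP', hJ, hsh⟩ :=
              ih P (A ∪ Q.fnames) hdP.1 hwfP i hij
            refine ⟨ns, .par P' Q, J, Pc, ?_, fun n hn => fun hA =>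
              hns n hn (Finset.mem_union_left _ hA), ⟨hwfP', hwfQ⟩, hJ, hsh⟩
            have h1 : Congr (Proc.par P Q)
                (Proc.par (resList ns (.par P' (.inp J Pc))) Q) := congr_par_left hc
            have h2 : Congr _ (resList ns (.par (.par P' (.inp J Pc)) Q)) :=
              congr_par_resList (fun n hn hfn =>
                hns n hn (Finset.mem_union_right _ hfn))
            have h3 := congr_resList (ns := ns) (congr_shuffle P' (.inp J Pc) Q)
            exact (h1.trans h2).trans h3
          · obtain ⟨ns, Q', J, Pc, hc, hns, hwfQ', hJ, hsh⟩ :=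
              ih Q (A ∪ P.fnames) hdP.2 hwfQ i hij
            refine ⟨ns, .par Q' P, J, Pc, ?_, fun n hn => fun hA =>
              hns n hn (Finset.mem_union_left _ hA), ⟨hwfQ', hwfP⟩, hJ, hsh⟩
            have h1 : Congr (Proc.par P Q)
                (Proc.par (resList ns (.par Q' (.inp J Pc))) P) :=
              (congr_par_right hc).trans (Congr.par_comm _ _)
            have h2 : Congr _ (resList ns (.par (.par Q' (.inp J Pc)) P)) :=
              congr_par_resList (fun n hn hfn =>
                hns n hn (Finset.mem_union_right _ hfn))
            have h3 := congr_resList (ns := ns) (congr_shuffle Q' (.inp J Pc) P)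
            exact (h1.trans h2).trans h3
      | ite s t P Q =>
          obtain ⟨_, _, hwfP, hwfQ⟩ := hwf
          have hdP : depth P ≤ d ∧ depth Q ≤ d := by simp [depth] at hd; omega
          by_cases hst : s = t
          · subst hst
            have hij' : i ∈ jSet P := by
              have : jSet (Proc.ite s s P Q) = jSet P := by simp [jSet]
              rwa [this] at hij
            obtain ⟨ns, R', J, Pc, hc, hns, hwfR', hJ, hsh⟩ := ih P A hdP.1 hwfP i hij'
            exact ⟨ns, R', J, Pc, (Congr.ite_eq s P Q).trans hc, hns, hwfR', hJ, hsh⟩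
          · have hij' : i ∈ jSet Q := by
              have : jSet (Proc.ite s t P Q) = jSet Q := by simp [jSet, if_neg hst]
              rwa [this] at hij
            obtain ⟨ns, R', J, Pc, hc, hns, hwfR', hJ, hsh⟩ := ih Q A hdP.2 hwfQ i hij'
            exact ⟨ns, R', J, Pc, (Congr.ite_ne hst P Q).trans hc, hns, hwfR', hJ, hsh⟩
      | repl P =>
          have hwfP : P.WF Ft := hwf
          have hdP : depth P ≤ d := by simp [depth] at hd; omega
          have hij' : i ∈ jSet P := hij
          obtain ⟨ns, P', J, Pc, hc, hns, hwfP', hJ, hsh⟩ :=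
            ih P (A ∪ P.fnames) hdP hwfP i hij'
          refine ⟨ns, .par P' (.repl P), J, Pc, ?_, fun n hn => fun hA =>
            hns n hn (Finset.mem_union_left _ hA), ⟨hwfP', hwfP⟩, hJ, hsh⟩
          have h1 : Congr (Proc.repl P) (Proc.par P (Proc.repl P)) := Congr.repl_unfold P
          have h2 : Congr _ (Proc.par (resList ns (.par P' (.inp J Pc)))
              (Proc.repl P)) := congr_par_left hc
          have h3 : Congr _ (resList ns (.par (.par P' (.inp J Pc)) (Proc.repl P))) :=
            congr_par_resList (fun n hn hfn =>
              hns n hn (Finset.mem_union_right _ (by simpa [Proc.fnames] using hfn)))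
          have h4 := congr_resList (ns := ns) (congr_shuffle P' (.inp J Pc) (Proc.repl P))
          exact ((h1.trans h2).trans h3).trans h4

/-- Extraction of `k` outputs to the top (modulo restrictions). -/
lemma outs_extract : ∀ (k : ℕ) (R : Proc) (A : Finset Name), R.WF Ft →
    (k : ℕ∞) ≤ oCnt R →
    ∃ (ns : List Name) (R' : Proc) (ms : List Name), ms.length = k ∧
      (∀ n ∈ ns, n ∉ A) ∧ R'.WF Ft ∧
      Congr R (resList ns (.par R'
        (parList (ms.map fun m => Proc.out none [.name m] .nil)))) := by
  intro k
  induction k with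
  | zero =>
      intro R A hwf _
      exact ⟨[], R, [], rfl, by simp, hwf, (Congr.par_nil R).symm⟩
  | succ k ih =>
      intro R A hwf hcnt
      have h1 : (1 : ℕ∞) ≤ oCnt R := by
        refine le_trans ?_ hcnt
        exact_mod_cast Nat.succ_le_succ (Nat.zero_le k)
      obtain ⟨ns₁, R₁, m, hc₁, hns₁, hwf₁⟩ :=
        out_extract (depth R) R A (le_refl _) hwf h1
      have hcR : oCnt R = oCnt R₁ + 1 := by
        have h2 := (congr_meas hc₁).1
        rw [oCnt_resList] at h2
        simpa [oCnt] using h2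
      have hk : (k : ℕ∞) ≤ oCnt R₁ := by
        refine enat_le_of_add_one ?_
        rw [← hcR]
        exact_mod_cast hcnt
      obtain ⟨ns₂, R₂, ms, hms, hns₂, hwf₂, hc₂⟩ := ih R₁ (insert m A) hwf₁ hk
      refine ⟨ns₁ ++ ns₂, R₂, m :: ms, by simp [hms], ?_, hwf₂, ?_⟩
      · intro n hn
        rcases List.mem_append.mp hn with h | h
        · exact hns₁ n h
        · exact fun hA => hns₂ n h (Finset.mem_insert_of_mem hA)
      · rw [resList_append]
        refine hc₁.trans (congr_resList ?_)
        have c2 : Congr (.par R₁ (.out none [.name m] .nil))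
            (.par (resList ns₂ (.par R₂
              (parList (ms.map fun m => Proc.out none [.name m] .nil))))
              (.out none [.name m] .nil)) := congr_par_left hc₂
        have c3 : Congr (.par (resList ns₂ (.par R₂
            (parList (ms.map fun m => Proc.out none [.name m] .nil))))
              (.out none [.name m] .nil))
            (resList ns₂ (.par (.par R₂
            (parList (ms.map fun m => Proc.out none [.name m] .nil)))
            (.out none [.name m] .nil))) := by
          refine congr_par_resList fun n hn hfn => ?_
          have : n = m := by
            simpa [Proc.fnames, optNames, Term.names] using hfn
          exact hns₂ n hn (this ▸ Finset.mem_insert_self m A)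
        have c4 := congr_resList (ns := ns₂) (congr_shuffle' R₂
          (parList (ms.map fun m => Proc.out none [.name m] .nil))
          (.out none [.name m] .nil))
        exact (c2.trans c3).trans c4

lemma joinMatch_exists : ∀ (ms : List Name) (J : List (Option Term × List Pat)),
    ms.length = J.length → (∀ j ∈ J, j.1 = none ∧ ∃ y, j.2 = [Pat.bind y]) →
    ∃ l, joinMatch (ms.map fun m => ((none : Option Term), [Term.name m])) J = some l := by
  intro ms
  induction ms with
  | nil =>
      intro J hlen hsh
      cases J with
      | nil => exact ⟨[], rfl⟩
      | cons j js => simp at hlen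
  | cons m ms ih =>
      intro J hlen hsh
      cases J with
      | nil => simp at hlen
      | cons j js =>
          obtain ⟨hj1, y, hj2⟩ := hsh j (by simp)
          obtain ⟨l₂, hl₂⟩ := ih js (by simpa using hlen)
            (fun j' hj' => hsh j' (by simp [hj']))
          obtain ⟨c, ps⟩ := j
          simp only at hj1 hj2
          subst hj1
          subst hj2
          refine ⟨[(y, Term.name m)] ++ l₂, ?_⟩
          simp only [List.map_cons, joinMatch, if_pos rfl, polyMatch, matchPat,
            Option.bind_eq_bind, Option.bind_some, hl₂]
          rfl

/-- A well-formed target process with an exposed redex reduces. -/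
lemma gather {R : Proc} (hwf : R.WF Ft) (hcf : canFire R) : Reduces R := by
  obtain ⟨i, hij, hi1, hile⟩ := hcf
  obtain ⟨ns, R', J, Pc, hc, _, hwfR', hJlen, hsh⟩ :=
    join_extract (depth R) R ∅ (le_refl _) hwf i hij
  have hcnt : oCnt R = oCnt R' := by
    have h1 := (congr_meas hc).1
    rw [oCnt_resList] at h1
    simpa [oCnt] using h1
  have hile' : (i : ℕ∞) ≤ oCnt R' := hcnt ▸ hile
  obtain ⟨ns₂, R₂, ms, hms, hns₂, hwf₂, hc₂⟩ :=
    outs_extract i R' ((Proc.inp J Pc).fnames) hwfR' hile'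
  set L := parList (ms.map fun m => Proc.out none [.name m] .nil) with hL
  have hcbig : Congr R (resList ns (resList ns₂ (.par R₂ (.par L (.inp J Pc))))) := by
    refine hc.trans (congr_resList ?_)
    have c2 : Congr (.par R' (.inp J Pc)) (.par (resList ns₂ (.par R₂ L)) (.inp J Pc)) :=
      congr_par_left hc₂
    have c3 : Congr _ (resList ns₂ (.par (.par R₂ L) (.inp J Pc))) :=
      congr_par_resList fun n hn => hns₂ n hn
    have c4 := congr_resList (ns := ns₂) ((Congr.par_assoc R₂ L (.inp J Pc)).symm)
    exact (c2.trans c3).trans c4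
  set outs : List (Option Term × List Term × Proc) :=
    ms.map fun m => ((none : Option Term), [Term.name m], Proc.nil) with houts
  have hLo : L = parList (outs.map fun o => Proc.out o.1 o.2.1 o.2.2) := by
    rw [hL, houts, List.map_map]
    rfl
  have hmsne : ms ≠ [] := by
    intro h
    rw [h] at hms
    simp at hms
    omega
  have hne : outs ≠ [] := by
    rw [houts]
    simpa using hmsne
  obtain ⟨l, hl⟩ := joinMatch_exists ms J (by rw [hms, hJlen]) hsh
  have hmatch : joinMatch (outs.map fun o => (o.1, o.2.1)) J = some l := by
    rw [houts, List.map_map]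
    exact hl
  have hred : Red (.par L (.inp J Pc))
      (.par (parList (outs.map fun o => o.2.2)) (Pc.subst (toSub l))) := by
    rw [hLo]
    exact Red.interact outs J Pc l hne hmatch
  exact ⟨_, Red.struct hcbig (red_resList (red_resList (red_par_right hred)))
    (Congr.refl _)⟩

/-- Filling a context with measure-equivalent processes yields
measure-equivalent processes. -/
lemma ctx_transfer : ∀ {k : ℕ} (C : Ctx k) (v w : Fin k → Proc),
    (∀ i, oCnt (v i) = oCnt (w i) ∧ jSet (v i) = jSet (w i) ∧ (sExp (v i) ↔ sExp (w i))) →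
    oCnt (C.fill v) = oCnt (C.fill w) ∧ jSet (C.fill v) = jSet (C.fill w) ∧
      (sExp (C.fill v) ↔ sExp (C.fill w)) := by
  intro k C
  induction C with
  | hole => intro v w h; exact h 0
  | const P => intro v w h; exact ⟨rfl, rfl, Iff.rfl⟩
  | out ch ts C ih =>
      intro v w h
      exact ⟨rfl, rfl, Iff.rfl⟩
  | inp J C ih =>
      intro v w h
      exact ⟨rfl, rfl, Iff.rfl⟩
  | res a C ih =>
      intro v w h
      obtain ⟨h1, h2, h3⟩ := ih v w h
      exact ⟨by simpa [Ctx.fill, oCnt] using h1, by simpa [Ctx.fill, jSet] using h2,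
        by simpa [Ctx.fill, sExp] using h3⟩
  | par C D ihC ihD =>
      intro v w h
      obtain ⟨h1, h2, h3⟩ := ihC _ _ (fun i => h (Fin.castAdd _ i))
      obtain ⟨h4, h5, h6⟩ := ihD _ _ (fun i => h (Fin.natAdd _ i))
      refine ⟨?_, ?_, ?_⟩
      · show oCnt (.par _ _) = oCnt (.par _ _)
        simp only [oCnt]
        rw [h1, h4]
      · show jSet (.par _ _) = jSet (.par _ _)
        simp only [jSet]
        rw [h2, h5]
      · show sExp (.par _ _) ↔ sExp (.par _ _)
        simp only [sExp]
        exact or_congr h3 h6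
  | ite s t C D ihC ihD =>
      intro v w h
      obtain ⟨h1, h2, h3⟩ := ihC _ _ (fun i => h (Fin.castAdd _ i))
      obtain ⟨h4, h5, h6⟩ := ihD _ _ (fun i => h (Fin.natAdd _ i))
      by_cases hst : s = t
      · refine ⟨?_, ?_, ?_⟩
        · show oCnt (.ite s t _ _) = oCnt (.ite s t _ _)
          simp only [oCnt, if_pos hst]
          exact h1
        · show jSet (.ite s t _ _) = jSet (.ite s t _ _)
          simp only [jSet, if_pos hst]
          exact h2
        · show sExp (.ite s t _ _) ↔ sExp (.ite s t _ _)
          simp only [sExp, if_pos hst]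
          exact h3
      · refine ⟨?_, ?_, ?_⟩
        · show oCnt (.ite s t _ _) = oCnt (.ite s t _ _)
          simp only [oCnt, if_neg hst]
          exact h4
        · show jSet (.ite s t _ _) = jSet (.ite s t _ _)
          simp only [jSet, if_neg hst]
          exact h5
        · show sExp (.ite s t _ _) ↔ sExp (.ite s t _ _)
          simp only [sExp, if_neg hst]
          exact h6
  | repl C ih =>
      intro v w h
      obtain ⟨h1, h2, h3⟩ := ih v w h
      refine ⟨?_, ?_, ?_⟩
      · show oCnt (.repl _) = oCnt (.repl _)
        simp only [oCnt]
        rw [h1]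
      · show jSet (.repl _) = jSet (.repl _)
        simp only [jSet]
        exact h2
      · show sExp (.repl _) ↔ sExp (.repl _)
        simp only [sExp]
        exact h3

/-- A valid encoding maps stuck processes to stuck processes. -/
lemma enc_stuck {F₁ F₂ : Features} (E : ValidEncoding F₁ F₂) {S : Proc}
    (hwf : S.WF F₁) (hst : ¬ Reduces S) : ¬ Reduces (E.enc S) := by
  intro hred
  have key : ∀ P, Reds (E.enc S) P → Reduces P := by
    intro P hP
    by_contra hstuck
    obtain ⟨S', T', hS', hT', hbeq⟩ := E.op_sound S P hwf hP
    have hS'eq : S' = S := stuck_reds hst hS'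
    have hT'eq : T' = P := stuck_reds hstuck hT'
    subst hS'eq; subst hT'eq
    exact hstuck (E.beq_reduction_sensitive (E.beq_equiv.symm hbeq) hred)
  have step : ∀ P : {P : Proc // Reds (E.enc S) P},
      ∃ Q : {P : Proc // Reds (E.enc S) P}, Red P.1 Q.1 := by
    rintro ⟨P, hP⟩
    obtain ⟨Q, hQ⟩ := key P hP
    exact ⟨⟨Q, hP.tail hQ⟩, hQ⟩
  have hdiv : Diverges (E.enc S) := by
    let f : ℕ → {P : Proc // Reds (E.enc S) P} := fun n =>
      Nat.rec ⟨E.enc S, Relation.ReflTransGen.refl⟩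
        (fun _ ih => Classical.choose (step ih)) n
    refine ⟨fun n => (f n).1, rfl, fun n => ?_⟩
    exact Classical.choose_spec (step (f n))
  obtain ⟨g, hg0, hgs⟩ := E.divergence_reflection S hwf hdiv
  exact hst ⟨g 1, hg0 ▸ hgs 0⟩

/-- The source language features. -/
abbrev Fs : Features := ⟨.A, .M, .C, .NO, .B⟩

/-- `a⟨b⟩`. -/
def pO : Proc := .out (some (.name 0)) [.name 1] .nil
/-- `a(x).✓`. -/
def pIa : Proc := .inp [(some (.name 0), [.bind 2])] .succ
/-- `b(x).✓`. -/
def pIb : Proc := .inp [(some (.name 1), [.bind 2])] .succ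
/-- `a⟨b⟩ | a(x).✓` — can succeed. -/
def pSg : Proc := .par pO pIa
/-- `a⟨b⟩ | b(x).✓` — stuck. -/
def pSb : Proc := .par pO pIb

lemma wf_pO : pO.WF Fs :=
  ⟨⟨rfl, Or.inr trivial⟩, rfl, fun t ht => by
    simp only [List.mem_singleton] at ht
    exact Or.inr (ht ▸ trivial), fun _ => rfl, trivial⟩

lemma wf_pIa : pIa.WF Fs := by
  refine ⟨rfl, ?_, ?_, trivial⟩
  · rintro j hj
    simp only [pIa, List.mem_singleton] at hj
    subst hj
    exact ⟨⟨rfl, Or.inr trivial⟩, rfl, fun p hp => by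
      simp only [List.mem_singleton] at hp
      exact hp ▸ trivial⟩
  · simp [pIa, joinBinds, Pat.binds]

lemma wf_pIb : pIb.WF Fs := by
  refine ⟨rfl, ?_, ?_, trivial⟩
  · rintro j hj
    simp only [pIb, List.mem_singleton] at hj
    subst hj
    exact ⟨⟨rfl, Or.inr trivial⟩, rfl, fun p hp => by
      simp only [List.mem_singleton] at hp
      exact hp ▸ trivial⟩
  · simp [pIb, joinBinds, Pat.binds]

lemma wf_pSg : pSg.WF Fs := ⟨wf_pO, wf_pIa⟩
lemma wf_pSb : pSb.WF Fs := ⟨wf_pO, wf_pIb⟩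

lemma pSg_maysucceed : MaySucceed pSg := by
  have hm : joinMatch [((some (.name 0) : Option Term), [Term.name 1])]
      [((some (.name 0) : Option Term), [Pat.bind 2])] = some [(2, Term.name 1)] := by
    simp [joinMatch, polyMatch, matchPat]
  have hred : Red (.par (parList [Proc.out (some (.name 0)) [.name 1] .nil])
      (.inp [(some (.name 0), [.bind 2])] .succ))
      (.par (parList [Proc.nil]) (Proc.succ.subst (toSub [(2, Term.name 1)]))) := by
    have := Red.interact [((some (.name 0) : Option Term), [Term.name 1], Proc.nil)]
      [((some (.name 0) : Option Term), [Pat.bind 2])] .succ [(2, Term.name 1)]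
      (by simp) (by simpa using hm)
    simpa using this
  have hc : Congr pSg (.par (parList [Proc.out (some (.name 0)) [.name 1] .nil])
      (.inp [(some (.name 0), [.bind 2])] .succ)) := by
    show Congr (.par pO pIa) _
    exact congr_par_left (Congr.par_nil pO).symm
  refine ⟨_, .par .nil .nil, Relation.ReflTransGen.single
    (Red.struct hc hred (Congr.refl _)), ?_⟩
  show Congr (.par (.par .nil .nil) (Proc.succ.subst (toSub [(2, Term.name 1)]))) _
  exact Congr.refl _

lemma pSb_stuck : ¬ Reduces pSb := by
  rintro ⟨Q, hred⟩
  have hp := (red_inv hred).2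
  rcases hp with hp | ⟨c, h1, h2⟩
  · rcases hp with hp | hp | ⟨c, ⟨h1, h2⟩ | ⟨h1, h2⟩⟩
    · exact absurd hp (by simp [pO, ip])
    · exact absurd hp (by simp [pIb, ip])
    · simp only [pO, pIb, oCh, iCh, Set.mem_singleton_iff, Set.mem_setOf_eq] at h1 h2
      obtain ⟨j, hj, hjc⟩ := h2
      simp only [List.mem_singleton] at hj
      subst hj
      rw [h1] at hjc
      simp at hjc
    · exact absurd h1 (by simp [pIb, oCh])
  · rcases h1 with h1 | h1
    · rcases h2 with h2 | h2
      · exact absurd h2 (by simp [pO, iCh])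
      · simp only [pO, oCh, Set.mem_singleton_iff] at h1
        simp only [pIb, iCh, Set.mem_setOf_eq] at h2
        obtain ⟨j, hj, hjc⟩ := h2
        simp only [List.mem_singleton] at hj
        subst hj
        rw [h1] at hjc
        simp at hjc
    · exact absurd h1 (by simp [pIb, oCh])

lemma pSb_nomaysucceed : ¬ MaySucceed pSb := by
  rintro ⟨Q, R, hreds, hcongr⟩
  have hQ : Q = pSb := stuck_reds pSb_stuck hreds
  subst hQ
  have := sExp_of_congr_succ hcongr
  simp [pSb, pO, pIb, sExp] at this

-- AUX END

/-- Theorem 7.1: there exists no valid encoding from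
`L_{A,M,C,NO,B}` (the asynchronous monadic π-calculus) into
`L_{A,M,D,NO,J}`. -/
theorem no_encoding_AMCNOB_to_AMDNOJ :
    ¬ Nonempty (ValidEncoding ⟨.A, .M, .C, .NO, .B⟩ ⟨.A, .M, .D, .NO, .J⟩) := by
  rintro ⟨E⟩
  -- the swap of the two channel names
  set σ : Name → Name := fun x => if x = 0 then 1 else if x = 1 then 0 else x with hσ
  have hinv : ∀ x, σ (σ x) = x := by
    intro x
    by_cases h0 : x = 0
    · simp [hσ, h0]
    · by_cases h1 : x = 1
      · simp [hσ, h1]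
      · simp [hσ, h0, h1]
  have hinj : Function.Injective σ := by
    intro x y h
    calc x = σ (σ x) := (hinv x).symm
      _ = σ (σ y) := by rw [h]
      _ = y := hinv y
  have hIab : nsub σ pIa = pIb := by
    show Proc.subst _ (.inp [(some (.name 0), [.bind 2])] .succ) = _
    simp only [Proc.subst, pIb]
    rfl
  have hIba : nsub σ pIb = pIa := by
    show Proc.subst _ (.inp [(some (.name 1), [.bind 2])] .succ) = _
    simp only [Proc.subst, pIa]
    rfl
  obtain ⟨σ', hφ, hS⟩ := E.name_invariance σ
  have heIb : E.enc pIb = nsub σ' (E.enc pIa) := by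
    have := (hS pIa wf_pIa).1 hinj
    rwa [hIab] at this
  have heIa : E.enc pIa = nsub σ' (E.enc pIb) := by
    have := (hS pIb wf_pIb).1 hinj
    rwa [hIba] at this
  have hdbl : ((E.enc pIa).subst (nm σ')).subst (nm σ') = E.enc pIa := by
    have h1 : (E.enc pIa).subst (nm σ') = E.enc pIb := heIb.symm
    rw [h1]
    exact heIa.symm
  have hm8 := subinv (E.enc pIa) σ' σ' hdbl
  have hmeasI : oCnt (E.enc pIb) = oCnt (E.enc pIa) ∧
      jSet (E.enc pIb) = jSet (E.enc pIa) ∧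
      (sExp (E.enc pIb) ↔ sExp (E.enc pIa)) := by
    rw [heIb]
    exact ⟨hm8.1, hm8.2.1, hm8.2.2.1⟩
  -- compositionality: the same context for both pairs
  obtain ⟨C, hC⟩ := E.comp_par (pO.fnames ∪ pIa.fnames)
  have hN : pO.fnames ∪ pIb.fnames = pO.fnames ∪ pIa.fnames := by decide
  have hfillg : E.enc pSg = C.fill ![E.enc pO, E.enc pIa] := hC pO pIa wf_pO wf_pIa rfl
  have hfillb : E.enc pSb = C.fill ![E.enc pO, E.enc pIb] := hC pO pIb wf_pO wf_pIb hN
  -- behavioural facts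
  have hms : MaySucceed (E.enc pSg) := (E.success_sensitive pSg wf_pSg).mp pSg_maysucceed
  have hstuckEnc : ¬ Reduces (E.enc pSb) := enc_stuck E wf_pSb pSb_stuck
  have hnoMS : ¬ MaySucceed (E.enc pSb) := fun h =>
    pSb_nomaysucceed ((E.success_sensitive pSb wf_pSb).mpr h)
  -- measure transfer between the two encodings
  have hmeq : oCnt (E.enc pSg) = oCnt (E.enc pSb) ∧
      jSet (E.enc pSg) = jSet (E.enc pSb) ∧
      (sExp (E.enc pSg) ↔ sExp (E.enc pSb)) := by
    rw [hfillg, hfillb]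
    apply ctx_transfer
    intro i
    match i with
    | 0 =>
        show oCnt (E.enc pO) = oCnt (E.enc pO) ∧ _ ∧ _
        exact ⟨rfl, rfl, Iff.rfl⟩
    | 1 =>
        show oCnt (E.enc pIa) = oCnt (E.enc pIb) ∧ _ ∧ _
        exact ⟨hmeasI.1.symm, hmeasI.2.1.symm, hmeasI.2.2.symm⟩
  obtain ⟨Q, R, hreds, hcongr⟩ := hms
  rcases Relation.ReflTransGen.cases_head hreds with rfl | ⟨X, hstep, _⟩
  · -- success statically exposed
    have hse : sExp (E.enc pSg) := sExp_of_congr_succ hcongr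
    have hse' : sExp (E.enc pSb) := hmeq.2.2.mp hse
    obtain ⟨R', hc⟩ := sExp_extract (depth (E.enc pSb)) _ (le_refl _) hse'
    exact hnoMS ⟨E.enc pSb, R', Relation.ReflTransGen.refl, hc⟩
  · -- a redex exposed
    have hcf : canFire (E.enc pSg) := (red_inv hstep).1
    have hcf' : canFire (E.enc pSb) := by
      obtain ⟨i, h1, h2, h3⟩ := hcf
      exact ⟨i, hmeq.2.1 ▸ h1, h2, hmeq.1 ▸ h3⟩
    exact hstuckEnc (gather (E.enc_wf pSb wf_pSb) hcf')

end Coordination
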